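/- arXiv:2012.12495 — 8 statements merged into one kernel-verified Lean document; each statement's English description precedes it below -/
import Mathlib

section
/- Let H be a simple graph and G a spanning subgraph of H (same vertex set, E(G) ⊆ E(H)). Suppose A ∈ S(G) is a real symmetric matrix with multiset of eigenvalues Λ that has the strong spectral property. Then for every ε > 0 there exists a matrix A' ∈ S(H) with the strong spectral property such that the multiset of eigenvalues of A' equals Λ and ‖A − A'‖ < ε. -/
attribute [local instance] Matrix.normedAddCommGroup

/-- `S(G)`: real symmetric matrices whose off-diagonal zero–nonzero pattern is given by `G`. -/
def inS {V : Type*} (G : SimpleGraph V) (A : Matrix V V ℝ) : Prop :=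
  A.IsSymm ∧ ∀ i j : V, i ≠ j → (A i j ≠ 0 ↔ G.Adj i j)

/-- The spectrum of a matrix as a multiset (roots of the characteristic polynomial,
counted with multiplicity).  For real symmetric matrices this is the multiset of
eigenvalues counted with multiplicity. -/
noncomputable def specM {V : Type*} [Fintype V] [DecidableEq V] (A : Matrix V V ℝ) :
    Multiset ℝ :=
  A.charpoly.roots

/-- The strong spectral property: the only symmetric `X` with `A∘X = O`, `I∘X = O`
and `AX - XA = O` is `X = O`. -/
def HasSSP {V : Type*} [Fintype V] (A : Matrix V V ℝ) : Prop :=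
  ∀ X : Matrix V V ℝ, X.IsSymm → (∀ i j, A i j * X i j = 0) →
    (∀ i, X i i = 0) → A * X = X * A → X = 0

/-! The matrices `exp K * A * exp (-K)` with `K` skew-symmetric form a piece of the orthogonal
orbit of `A`: they are symmetric with the spectrum of `A`. Parametrise them by
`K = M - Mᵀ` and read off only the entries at the non-edges of `G`. At `M = 0` the derivative
of this map is `M ↦ K A - A K` restricted to those entries, and the SSP of `A` is exactly what
makes it surjective: a vector orthogonal to its range defines a symmetric `X`, supported on
the non-edges, with `tr (X (K A - A K)) = tr ((A X - X A) K) = 0` for all skew `K`; taking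
`K = A X - X A` gives `A X = X A`, hence `X = 0`. By the inverse function theorem, matrices of
the orbit arbitrarily close to `A` take any small prescribed values at the non-edges of `G`.
Prescribing a small `t > 0` on the edges of `H` and `0` elsewhere yields a matrix in `S(H)`:
on the edges of `G` it is close to `A`, so still nonzero, and it keeps the SSP, which is an
open condition. -/

open Matrix NormedSpace Filter Topology

theorem inS.apply_eq_zero {V : Type*} {G : SimpleGraph V} {A : Matrix V V ℝ} (hA : inS G A)
    {i j : V} (hij : i ≠ j) (h : ¬ G.Adj i j) : A i j = 0 :=
  not_not.1 fun hne => h ((hA.2 i j hij).1 hne)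

theorem hasStrictFDerivAt_exp_mul_mul_exp_neg {𝕂 𝔸 : Type*} [RCLike 𝕂] [NormedRing 𝔸]
    [NormedAlgebra 𝕂 𝔸] [CompleteSpace 𝔸] (a : 𝔸) :
    HasStrictFDerivAt (fun x : 𝔸 => exp x * a * exp (-x))
      ((ContinuousLinearMap.mul 𝕂 𝔸).flip a - ContinuousLinearMap.mul 𝕂 𝔸 a) 0 := by
  have hexp : HasStrictFDerivAt (exp : 𝔸 → 𝔸) (1 : 𝔸 →L[𝕂] 𝔸) 0 := hasStrictFDerivAt_exp_zero
  have hexp_neg : HasStrictFDerivAt (fun x : 𝔸 => exp (-x)) (-1 : 𝔸 →L[𝕂] 𝔸) 0 := by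
    rw [← neg_zero] at hexp
    simpa using hexp.comp (0 : 𝔸) (hasStrictFDerivAt_id (0 : 𝔸)).neg
  refine ((hexp.mul_const' a).mul' hexp_neg).congr_fderiv ?_
  ext x
  simp [sub_eq_add_neg, add_comm]

namespace Matrix

variable {V : Type*} [Fintype V]

theorem trace_mul_commutator {R : Type*} [CommRing R] (X K A : Matrix V V R) :
    trace (X * (K * A - A * K)) = trace ((A * X - X * A) * K) := by
  rw [mul_sub, sub_mul, trace_sub, trace_sub, ← Matrix.mul_assoc, trace_mul_cycle,
    Matrix.mul_assoc, Matrix.mul_assoc]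

theorem commute_of_forall_trace_mul_commutator_eq_zero {A X : Matrix V V ℝ} (hA : A.IsSymm)
    (hX : X.IsSymm) (h : ∀ M, trace (X * ((M - Mᵀ) * A - A * (M - Mᵀ))) = 0) :
    Commute A X := by
  set C := A * X - X * A with hC
  have hC_skew : Cᵀ = -C := by
    rw [hC, transpose_sub, transpose_mul, transpose_mul, hA.eq, hX.eq, neg_sub]
  have hhalf : (2⁻¹ : ℝ) • C - ((2⁻¹ : ℝ) • C)ᵀ = C := by
    rw [transpose_smul, hC_skew, smul_neg, sub_neg_eq_add, ← add_smul]
    norm_num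
  have hCC : trace (C * Cᴴ) = 0 := by
    rw [conjTranspose_eq_transpose_of_trivial, hC_skew, Matrix.mul_neg, trace_neg, neg_eq_zero,
      ← trace_mul_commutator, ← h ((2⁻¹ : ℝ) • C), hhalf]
  exact sub_eq_zero.1 (trace_mul_conjTranspose_self_eq_zero_iff.1 hCC)

theorem eventually_apply_ne_zero (A : Matrix V V ℝ) :
    ∀ᶠ B in 𝓝 A, ∀ i j, A i j ≠ 0 → B i j ≠ 0 := by
  simp only [Filter.eventually_all]
  exact fun i j h => (continuous_apply_apply i j).continuousAt.eventually_ne h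

variable [DecidableEq V]

theorem isSymm_exp_mul_mul_exp_neg {A K : Matrix V V ℝ} (hA : A.IsSymm) (hK : Kᵀ = -K) :
    (exp K * A * exp (-K)).IsSymm := by
  rw [IsSymm, transpose_mul, transpose_mul, ← exp_transpose, ← exp_transpose, transpose_neg, hK,
    neg_neg, hA.eq, mul_assoc]

theorem charpoly_exp_mul_mul_exp_neg (K A : Matrix V V ℝ) :
    (exp K * A * exp (-K)).charpoly = A.charpoly := by
  rw [exp_neg]
  exact charpoly_units_conj (isUnit_exp K).unit A

end Matrix

section NonEdge

variable {V : Type*} [LinearOrder V] (G H : SimpleGraph V) [DecidableRel G.Adj]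

/-- Each non-edge `{i, j}` of `G` is listed once, as the pair with `i < j`. -/
abbrev NonEdge := {p : V × V // p.1 < p.2 ∧ ¬ G.Adj p.1 p.2}

def nonEdgeMatrix (φ : EuclideanSpace ℝ (NonEdge G)) : Matrix V V ℝ :=
  of fun i j => if h : i < j ∧ ¬ G.Adj i j then φ ⟨(i, j), h⟩ else 0

variable {G} in
theorem nonEdgeMatrix_apply_of_not {φ : EuclideanSpace ℝ (NonEdge G)} {i j : V}
    (h : ¬ (i < j ∧ ¬ G.Adj i j)) : nonEdgeMatrix G φ i j = 0 :=
  dif_neg h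

variable {G} in
theorem mul_nonEdgeMatrix_apply_eq_zero {A : Matrix V V ℝ} (hA : inS G A)
    {φ : EuclideanSpace ℝ (NonEdge G)} {i j : V} : A i j * nonEdgeMatrix G φ i j = 0 := by
  by_cases h : i < j ∧ ¬ G.Adj i j
  · rw [hA.apply_eq_zero h.1.ne h.2, zero_mul]
  · rw [nonEdgeMatrix_apply_of_not h, mul_zero]

variable [Fintype V]

noncomputable def nonEdgeEntries : Matrix V V ℝ →L[ℝ] EuclideanSpace ℝ (NonEdge G) :=
  LinearMap.toContinuousLinearMap
    { toFun := fun B => WithLp.toLp 2 fun q => B q.1.1 q.1.2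
      map_add' := fun _ _ => rfl
      map_smul' := fun _ _ => rfl }

@[simp]
theorem nonEdgeEntries_apply (B : Matrix V V ℝ) (q : NonEdge G) :
    nonEdgeEntries G B q = B q.1.1 q.1.2 :=
  rfl

variable [DecidableRel H.Adj] in
def nonEdgeIndicator : EuclideanSpace ℝ (NonEdge G) :=
  WithLp.toLp 2 fun q => if H.Adj q.1.1 q.1.2 then 1 else 0

variable {G H}

theorem nonEdgeEntries_eq_zero {A : Matrix V V ℝ} (hA : inS G A) : nonEdgeEntries G A = 0 := by
  ext q
  exact hA.apply_eq_zero q.2.1.ne q.2.2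

theorem inner_nonEdgeEntries (φ : EuclideanSpace ℝ (NonEdge G)) (B : Matrix V V ℝ) :
    inner ℝ φ (nonEdgeEntries G B) = trace (nonEdgeMatrix G φ * Bᵀ) := by
  simp only [PiLp.inner_apply, nonEdgeEntries_apply, RCLike.inner_apply, conj_trivial, trace,
    diag, mul_apply, transpose_apply, nonEdgeMatrix, of_apply]
  rw [← Fintype.sum_prod_type',
    ← Fintype.sum_subtype_add_sum_subtype (fun p : V × V => p.1 < p.2 ∧ ¬ G.Adj p.1 p.2)]
  refine (add_zero _).symm.trans
    (congrArg₂ (· + ·) (Fintype.sum_congr _ _ fun q => ?_) (Fintype.sum_eq_zero _ fun p => ?_).symm)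
  · rw [dif_pos q.2, mul_comm]
  · rw [dif_neg p.2, zero_mul]

theorem inS_of_nonEdgeEntries_eq_smul [DecidableRel H.Adj] (hGH : G ≤ H) {A B : Matrix V V ℝ}
    (hA : inS G A) (hB : B.IsSymm) (hAB : ∀ i j, A i j ≠ 0 → B i j ≠ 0) {t : ℝ} (ht : t ≠ 0)
    (hBt : nonEdgeEntries G B = t • nonEdgeIndicator G H) : inS H B := by
  have hlt : ∀ i j, i < j → (B i j ≠ 0 ↔ H.Adj i j) := by
    intro i j hij
    by_cases hG : G.Adj i j
    · exact iff_of_true (hAB i j ((hA.2 i j hij.ne).2 hG)) (hGH hG)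
    · have hq := congrArg (· ⟨(i, j), hij, hG⟩) hBt
      simp only [nonEdgeEntries_apply, nonEdgeIndicator, PiLp.smul_apply, smul_eq_mul] at hq
      split_ifs at hq with hH <;> simp [hq, ht, hH]
  refine ⟨hB, fun i j hij => ?_⟩
  rcases hij.lt_or_gt with h | h
  · exact hlt i j h
  · rw [← hB.apply, H.adj_comm]
    exact hlt j i h

end NonEdge

section LinftyOpNorm

/- Any norm would do, since all of them induce the product topology; this one makes matrices a
Banach algebra, as the matrix exponential requires. -/
attribute [local instance 2000] Matrix.linftyOpNormedAddCommGroup Matrix.linftyOpNormedSpace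
  Matrix.linftyOpNormedRing Matrix.linftyOpNormedAlgebra

variable {V : Type*} [Fintype V]

def sspMap (A : Matrix V V ℝ) :
    Matrix V V ℝ →ₗ[ℝ] (Matrix V V ℝ × Matrix V V ℝ) × (V → ℝ) × Matrix V V ℝ where
  toFun X := ((Xᵀ - X, A ⊙ X), diag X, A * X - X * A)
  map_add' X Y := by
    simp only [transpose_add, hadamard_add, diag_add, Matrix.mul_add, Matrix.add_mul,
      Prod.mk_add_mk]
    congr 3 <;> abel
  map_smul' c X := by
    simp only [transpose_smul, hadamard_smul, diag_smul, Matrix.mul_smul, Matrix.smul_mul,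
      Prod.smul_mk, RingHom.id_apply, smul_sub]

theorem hasSSP_iff_injective_sspMap (A : Matrix V V ℝ) :
    HasSSP A ↔ Function.Injective (sspMap A) := by
  rw [← LinearMap.ker_eq_bot, LinearMap.ker_eq_bot']
  simp only [sspMap, LinearMap.coe_mk, AddHom.coe_mk, Prod.mk_eq_zero, sub_eq_zero]
  constructor
  · rintro h X ⟨⟨hsymm, hhad⟩, hdiag, hcomm⟩
    exact h X hsymm (fun i j => congrFun₂ hhad i j) (congrFun hdiag) hcomm
  · intro h X hsymm hhad hdiag hcomm
    exact h X ⟨⟨hsymm, ext hhad⟩, funext hdiag, hcomm⟩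

theorem isOpen_setOf_hasSSP : IsOpen {A : Matrix V V ℝ | HasSSP A} := by
  have hcont : Continuous fun A : Matrix V V ℝ => LinearMap.toContinuousLinearMap (sspMap A) := by
    refine continuous_clm_apply.2 fun X => ?_
    show Continuous fun A : Matrix V V ℝ => ((Xᵀ - X, A ⊙ X), diag X, A * X - X * A)
    have hhad : Continuous fun A : Matrix V V ℝ => A ⊙ X :=
      continuous_pi fun i => continuous_pi fun j => (continuous_apply_apply i j).mul continuous_const
    fun_prop
  simp_rw [hasSSP_iff_injective_sspMap]
  exact ContinuousLinearMap.isOpen_injective.preimage hcont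

variable (V) in
noncomputable def subTransposeCLM : Matrix V V ℝ →L[ℝ] Matrix V V ℝ :=
  LinearMap.toContinuousLinearMap (LinearMap.id - (transposeLinearEquiv V V ℝ ℝ).toLinearMap)

variable [DecidableEq V] [LinearOrder V] {G : SimpleGraph V} [DecidableRel G.Adj]

theorem surjective_nonEdgeEntries_comp {A : Matrix V V ℝ} (hA : inS G A) (hssp : HasSSP A) :
    Function.Surjective ((nonEdgeEntries G).comp
      (((ContinuousLinearMap.mul ℝ _).flip A - ContinuousLinearMap.mul ℝ _ A).comp
        (subTransposeCLM V))) := by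
  rw [← ContinuousLinearMap.coe_coe, ← LinearMap.range_eq_top, ← Submodule.orthogonal_eq_bot_iff,
    Submodule.eq_bot_iff]
  intro φ hφ
  set E := nonEdgeMatrix G φ
  have horth : ∀ M : Matrix V V ℝ, trace ((E + Eᵀ) * ((M - Mᵀ) * A - A * (M - Mᵀ))) = 0 := by
    intro M
    set C := (M - Mᵀ) * A - A * (M - Mᵀ)
    have hC : Cᵀ = C := by
      simp only [C, transpose_sub, transpose_mul, transpose_transpose, hA.1.eq]
      noncomm_ring
    have hEC : trace (E * Cᵀ) = 0 := by
      rw [← inner_nonEdgeEntries]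
      exact Submodule.inner_left_of_mem_orthogonal (LinearMap.mem_range_self _ M) hφ
    rw [Matrix.add_mul, trace_add, ← trace_transpose (Eᵀ * C), transpose_mul, transpose_transpose,
      trace_mul_comm Cᵀ, hEC, add_zero, ← hC, hEC]
  have hAE : ∀ i j, A i j * E i j = 0 := fun i j => mul_nonEdgeMatrix_apply_eq_zero hA
  have hX : E + Eᵀ = 0 := by
    refine hssp _ (isSymm_add_transpose_self E) (fun i j => ?_) (fun i => ?_)
      (commute_of_forall_trace_mul_commutator_eq_zero hA.1 (isSymm_add_transpose_self E) horth).eq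
    · rw [Matrix.add_apply, transpose_apply, mul_add, hAE, zero_add, ← hA.1.apply, hAE]
    · simp [E, nonEdgeMatrix_apply_of_not]
  ext q
  simpa [E, nonEdgeMatrix, q.2, q.2.1.not_gt] using congrFun₂ hX q.1.1 q.1.2

theorem eventually_exists_nonEdgeEntries_conj_eq {A : Matrix V V ℝ} (hA : inS G A)
    (hssp : HasSSP A) {N : Set (Matrix V V ℝ)} (hN : N ∈ 𝓝 A) :
    ∀ᶠ v in 𝓝 0, ∃ M : Matrix V V ℝ, exp (M - Mᵀ) * A * exp (-(M - Mᵀ)) ∈ N ∧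
      nonEdgeEntries G (exp (M - Mᵀ) * A * exp (-(M - Mᵀ))) = v := by
  set f := fun M : Matrix V V ℝ => exp (M - Mᵀ) * A * exp (-(M - Mᵀ))
  have hf0 : f 0 = A := by simp [f]
  have hf : HasStrictFDerivAt f
      ((((ContinuousLinearMap.mul ℝ _).flip A - ContinuousLinearMap.mul ℝ _ A).comp
        (subTransposeCLM V))) 0 := by
    have h := hasStrictFDerivAt_exp_mul_mul_exp_neg (𝕂 := ℝ) A
    rw [show (0 : Matrix V V ℝ) = subTransposeCLM V 0 from (map_zero _).symm] at h
    exact h.comp 0 (subTransposeCLM V).hasStrictFDerivAt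
  have hmap := ((nonEdgeEntries G).hasStrictFDerivAt.comp 0 hf).map_nhds_eq_of_surj
    (LinearMap.range_eq_top.2 (surjective_nonEdgeEntries_comp hA hssp))
  rw [hf0, nonEdgeEntries_eq_zero hA] at hmap
  have hpre : f ⁻¹' N ∈ 𝓝 0 := hf.continuousAt.preimage_mem_nhds (hf0 ▸ hN)
  filter_upwards [hmap ▸ Filter.image_mem_map hpre] with v ⟨M, hM, hMv⟩
  exact ⟨M, hM, hMv⟩

end LinftyOpNorm

/-- Theorem 1.1 / thm:sspsuper: if `G` is a spanning subgraph of `H` and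
`A ∈ S(G)` has the SSP with spectrum `Λ`, then for every `ε > 0` there is `A' ∈ S(H)` with
the SSP, the same spectrum, and `‖A - A'‖ < ε`. -/
theorem stmt0 {V : Type*} [Fintype V] [DecidableEq V]
    (G H : SimpleGraph V) (hGH : G ≤ H)
    (A : Matrix V V ℝ) (hA : inS G A) (hssp : HasSSP A)
    (ε : ℝ) (hε : 0 < ε) :
    ∃ A' : Matrix V V ℝ,
      inS H A' ∧ HasSSP A' ∧ specM A' = specM A ∧ ‖A - A'‖ < ε := by
  classical
  let : LinearOrder V := LinearOrder.lift' (Fintype.equivFin V) (Fintype.equivFin V).injective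
  have hclose : ∀ᶠ B in 𝓝 A, ‖A - B‖ < ε :=
    (continuous_const.sub continuous_id).norm.continuousAt.eventually_lt continuousAt_const
      (by simpa using hε)
  have hN := (isOpen_setOf_hasSSP.eventually_mem hssp).and (hclose.and A.eventually_apply_ne_zero)
  have hsmall : Tendsto (fun t : ℝ => t • nonEdgeIndicator G H) (𝓝[>] 0) (𝓝 0) := by
    have hcont : Continuous fun t : ℝ => t • nonEdgeIndicator G H :=
      continuous_id.smul continuous_const
    simpa using (hcont.tendsto 0).mono_left nhdsWithin_le_nhds
  obtain ⟨t, ⟨M, ⟨hssp', hε', hnz⟩, hM⟩, ht⟩ :=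
    ((hsmall.eventually (eventually_exists_nonEdgeEntries_conj_eq hA hssp hN)).and
      self_mem_nhdsWithin).exists
  have hskew : (M - Mᵀ)ᵀ = -(M - Mᵀ) := by rw [transpose_sub, transpose_transpose, neg_sub]
  exact ⟨_, inS_of_nonEdgeEntries_eq_smul hGH hA (isSymm_exp_mul_mul_exp_neg hA.1 hskew) hnz
    (ne_of_gt ht) hM, hssp', congrArg Polynomial.roots (charpoly_exp_mul_mul_exp_neg _ A), hε'⟩
end

section
/- Let B be a k × k real symmetric matrix with eigenvalues μ₁, …, μ_k and let u be a unit eigenvector of B corresponding to μ₁ (uᵀu = 1). Let A be an n × n real symmetric matrix of block form A = [[A₁, b], [bᵀ, μ₁]] (i.e., the (n,n)-entry of A equals μ₁), with eigenvalues λ₁, …, λ_n. Then the (n−1+k) × (n−1+k) symmetric matrix C = [[A₁, b uᵀ], [u bᵀ, B]] has eigenvalues λ₁, …, λ_n, μ₂, …, μ_k (as a multiset). -/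
/-! Take the Schur complement of the lower-right block of `x - C`. When `x` is neither `μ₁` nor
an eigenvalue of `B`, the unit eigenvector `u` gives `(x - B)⁻¹ u = (x - μ₁)⁻¹ u`, so
`det (x - C) = det (x - B) · det (x - A₁ - (x - μ₁)⁻¹ b bᵀ)`. The matrix `A` is the case `k = 1`,
`B = [μ₁]`, `u = 1` of the same construction, so `χ_C · (X - μ₁) = χ_A · χ_B` at all but finitely
many points, hence as polynomials, and the root multisets agree. -/

open Polynomial Matrix

theorem Polynomial.eq_of_eval_eq_of_eval_ne_zero {R : Type*} [CommRing R] [IsDomain R]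
    [Infinite R] {p q r : R[X]} (hr : r ≠ 0) (h : ∀ x, r.eval x ≠ 0 → p.eval x = q.eval x) :
    p = q :=
  eq_of_infinite_eval_eq p q <| (finite_setOfPred_isRoot hr).infinite_compl.mono fun x hx => h x hx

theorem Matrix.charpoly_of_fin_one {R : Type*} [CommRing R] (a : R) :
    (of fun (_ : Fin 1) (_ : Fin 1) => a).charpoly = X - C a := by
  simp [charpoly]

section

variable {K l m : Type*} [Field K] [Fintype l] [DecidableEq l] [Fintype m] [DecidableEq m]

theorem Matrix.invOf_mulVec_eq_inv_smul {M : Matrix l l K} [Invertible M] {u : l → K} {c : K}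
    (hc : c ≠ 0) (h : M *ᵥ u = c • u) : ⅟M *ᵥ u = c⁻¹ • u :=
  calc ⅟M *ᵥ u = ⅟M *ᵥ (M *ᵥ (c⁻¹ • u)) := by
        rw [mulVec_smul, h, smul_smul, inv_mul_cancel₀ hc, one_smul]
    _ = c⁻¹ • u := by rw [mulVec_mulVec, invOf_mul_self, one_mulVec]

theorem Matrix.eval_charpoly_fromBlocks_vecMulVec (A : Matrix m m K) (b : m → K)
    {B : Matrix l l K} {u : l → K} {μ x : K} (hu : B *ᵥ u = μ • u) (hunit : u ⬝ᵥ u = 1)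
    (hx : ((X - C μ) * B.charpoly).eval x ≠ 0) :
    (fromBlocks A (vecMulVec b u) (vecMulVec u b) B).charpoly.eval x =
      B.charpoly.eval x * (A + (x - μ)⁻¹ • vecMulVec b b).charpoly.eval x := by
  rw [eval_mul, eval_sub, eval_X, eval_C, mul_ne_zero_iff, sub_ne_zero] at hx
  obtain ⟨hxμ, hxB⟩ := hx
  set M := scalar l x - B
  have : Invertible M := invertibleOfIsUnitDet M <| by rwa [isUnit_iff_ne_zero, ← eval_charpoly]
  have hMu : M *ᵥ u = (x - μ) • u := by
    ext i
    simp [M, sub_mulVec, hu, sub_mul]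
  have hschur : vecMulVec b u * ⅟M * vecMulVec u b = (x - μ)⁻¹ • vecMulVec b b := by
    rw [Matrix.mul_assoc, mul_vecMulVec, invOf_mulVec_eq_inv_smul (sub_ne_zero.2 hxμ) hMu,
      vecMulVec_mul_vecMulVec, dotProduct_smul, hunit, smul_eq_mul, mul_one, vecMulVec_smul]
  have hblocks : scalar (m ⊕ l) x - fromBlocks A (vecMulVec b u) (vecMulVec u b) B =
      fromBlocks (scalar m x - A) (-vecMulVec b u) (-vecMulVec u b) M := by
    ext (i | i) (j | j) <;> simp [M, diagonal_apply]
  rw [eval_charpoly, hblocks, det_fromBlocks₂₂]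
  simp only [Matrix.neg_mul, Matrix.mul_neg, neg_neg]
  rw [hschur, eval_charpoly, eval_charpoly, sub_add_eq_sub_sub]

theorem Matrix.charpoly_fromBlocks_vecMulVec_mul_charpoly [Infinite K] {l' : Type*} [Fintype l']
    [DecidableEq l'] (A : Matrix m m K) (b : m → K) {B : Matrix l l K} {u : l → K}
    {B' : Matrix l' l' K} {u' : l' → K} {μ : K} (hu : B *ᵥ u = μ • u) (hunit : u ⬝ᵥ u = 1)
    (hu' : B' *ᵥ u' = μ • u') (hunit' : u' ⬝ᵥ u' = 1) :
    (fromBlocks A (vecMulVec b u) (vecMulVec u b) B).charpoly * B'.charpoly =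
      (fromBlocks A (vecMulVec b u') (vecMulVec u' b) B').charpoly * B.charpoly := by
  refine eq_of_eval_eq_of_eval_ne_zero
    ((((monic_X_sub_C μ).mul B.charpoly_monic).mul B'.charpoly_monic).ne_zero) fun x hx => ?_
  have hxB : ((X - C μ) * B.charpoly).eval x ≠ 0 := left_ne_zero_of_mul (by rwa [← eval_mul])
  have hxB' : ((X - C μ) * B'.charpoly).eval x ≠ 0 := by
    rw [eval_mul] at hx hxB ⊢
    exact mul_ne_zero (left_ne_zero_of_mul hxB) (right_ne_zero_of_mul hx)
  rw [eval_mul, eval_mul, eval_charpoly_fromBlocks_vecMulVec A b hu hunit hxB,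
    eval_charpoly_fromBlocks_vecMulVec A b hu' hunit' hxB']
  ring

end

theorem stmt1_general (n k : ℕ) (B : Matrix (Fin k) (Fin k) ℝ)
    (μ₁ : ℝ) (u : Fin k → ℝ) (hu : B.mulVec u = μ₁ • u) (hunit : ∑ i, u i ^ 2 = 1)
    (A₁ : Matrix (Fin n) (Fin n) ℝ) (b : Fin n → ℝ) :
    specM (Matrix.fromBlocks A₁ (Matrix.vecMulVec b u) (Matrix.vecMulVec u b) B) + {μ₁} =
      specM (Matrix.fromBlocks A₁ (Matrix.of fun i (_ : Fin 1) => b i)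
        (Matrix.of fun (_ : Fin 1) j => b j) (Matrix.of fun (_ : Fin 1) (_ : Fin 1) => μ₁))
        + specM B := by
  set B₁ : Matrix (Fin 1) (Fin 1) ℝ := of fun _ _ => μ₁
  have hA : fromBlocks A₁ (of fun i (_ : Fin 1) => b i) (of fun (_ : Fin 1) j => b j) B₁ =
      fromBlocks A₁ (vecMulVec b 1) (vecMulVec 1 b) B₁ := by
    congr <;> ext <;> simp
  have hpoly := charpoly_fromBlocks_vecMulVec_mul_charpoly A₁ b hu
    (by simpa [dotProduct, sq] using hunit) (B' := B₁) (u' := 1)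
    (by ext; simp [B₁, mulVec, dotProduct]) (by simp)
  rw [charpoly_of_fin_one, ← hA] at hpoly
  unfold specM
  rw [← roots_X_sub_C, ← roots_mul (mul_ne_zero (charpoly_monic _).ne_zero (X_sub_C_ne_zero μ₁)),
    hpoly, roots_mul (mul_ne_zero (charpoly_monic _).ne_zero (charpoly_monic B).ne_zero)]

/-- Lemma HS04: if `B` is `k × k` symmetric with unit eigenvector `u`
for the eigenvalue `μ₁`, and `A = [[A₁, b], [bᵀ, μ₁]]`, then
`C = [[A₁, buᵀ], [ubᵀ, B]]` has eigenvalues `λ₁, …, λ_n, μ₂, …, μ_k`; i.e.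
`spec(C) + {μ₁} = spec(A) + spec(B)` as multisets. -/
theorem stmt1 (n k : ℕ) (B : Matrix (Fin k) (Fin k) ℝ) (hB : B.IsSymm)
    (μ₁ : ℝ) (u : Fin k → ℝ) (hu : B.mulVec u = μ₁ • u) (hunit : ∑ i, u i ^ 2 = 1)
    (A₁ : Matrix (Fin n) (Fin n) ℝ) (hA₁ : A₁.IsSymm) (b : Fin n → ℝ) :
    specM (Matrix.fromBlocks A₁ (Matrix.vecMulVec b u) (Matrix.vecMulVec u b) B) + {μ₁} =
      specM (Matrix.fromBlocks A₁ (Matrix.of fun i (_ : Fin 1) => b i)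
        (Matrix.of fun (_ : Fin 1) j => b j) (Matrix.of fun (_ : Fin 1) (_ : Fin 1) => μ₁))
        + specM B :=
  stmt1_general n k B μ₁ u hu hunit A₁ b
end

section
/- Every connected simple graph G on n ≥ 2 vertices has a spanning subgraph H (same vertex set) such that every connected component of H is a star with at least two vertices. -/
/-!
Take a spanning subgraph `H ≤ G` that is minimal among those without isolated vertices (a minimal
edge cover; `G` itself is one, since it is connected with at least two vertices). Minimality means
no edge can be deleted, so every edge of `H` has an endpoint of degree one. In such a graph, if `ℓ`
is a leaf with neighbour `h`, every edge at a neighbour of `h` leads back to `h`; hence the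
component of `h` consists of `h` and its neighbours, and every edge in it meets `h`: it is a star.
-/

namespace SimpleGraph

variable {V : Type*} {H : SimpleGraph V}

def EveryEdgeHasLeaf (H : SimpleGraph V) : Prop :=
  ∀ ⦃u v⦄, H.Adj u v → (∀ w, H.Adj u w → w = v) ∨ (∀ w, H.Adj v w → w = u)

lemma everyEdgeHasLeaf_of_minimal
    (hH : Minimal (fun H : SimpleGraph V => ∀ v, ¬ H.IsIsolated v) H) : H.EveryEdgeHasLeaf := by
  intro u v huv
  by_contra! ⟨⟨w, huw, hwv⟩, ⟨w', hvw', hw'u⟩⟩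
  set H' := H.deleteEdges {s(u, v)}
  have hH' : ∀ x, ¬ H'.IsIsolated x := by
    intro x hx
    obtain ⟨y, hxy⟩ := exists_adj_iff_not_isIsolated.mpr (hH.prop x)
    by_cases he : s(x, y) = s(u, v)
    · rcases Sym2.eq_iff.mp he with ⟨rfl, rfl⟩ | ⟨rfl, rfl⟩
      · exact hx w (by simp [H', huw, hwv, huv.ne])
      · exact hx w' (by simp [H', hvw', hw'u, huv.ne'])
    · exact hx y (by simp [H', hxy, he])
  have : H'.Adj u v := hH.le_of_le hH' (deleteEdges_le _) huv
  simp [H'] at this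

namespace EveryEdgeHasLeaf

section Leaf

variable (hH : H.EveryEdgeHasLeaf) {ℓ h : V} (hℓh : H.Adj ℓ h) (hℓ : ∀ w, H.Adj ℓ w → w = h)
include hH hℓh hℓ

lemma eq_or_eq_of_adj {a b : V} (ha : a = h ∨ H.Adj h a) (hab : H.Adj a b) : a = h ∨ b = h := by
  rcases ha with rfl | hha
  · exact .inl rfl
  rcases hH hha with hh | ha
  · -- `h` is a leaf, so its only neighbour `a` is the leaf `ℓ`
    obtain rfl : ℓ = a := hh ℓ hℓh.symm
    exact .inr (hℓ b hab)
  · exact .inr (ha b hab)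

lemma eq_or_adj_of_reachable {a : V} (hr : H.Reachable h a) : a = h ∨ H.Adj h a := by
  suffices ∀ x y, H.Walk x y → (x = h ∨ H.Adj h x) → y = h ∨ H.Adj h y from
    this h a hr.some (.inl rfl)
  intro x y p
  induction p with
  | nil => exact id
  | cons hxy _ ih =>
    intro hx
    apply ih
    rcases eq_or_eq_of_adj hH hℓh hℓ hx hxy with rfl | rfl
    · exact .inr hxy
    · exact .inl rfl

end Leaf

lemma exists_star_hub (hH : H.EveryEdgeHasLeaf) (hcover : ∀ v, ¬ H.IsIsolated v)
    (c : H.ConnectedComponent) :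
    ∃ hub ∈ c.supp, (∃ w ∈ c.supp, w ≠ hub) ∧ (∀ w ∈ c.supp, w ≠ hub → H.Adj hub w) ∧
      ∀ u v : V, u ∈ c.supp → H.Adj u v → u = hub ∨ v = hub := by
  induction c using ConnectedComponent.ind with | h x => ?_
  obtain ⟨y, hxy⟩ := exists_adj_iff_not_isIsolated.mpr (hcover x)
  obtain ⟨ℓ, h, hℓh, hℓ, hxh⟩ :
      ∃ ℓ h, H.Adj ℓ h ∧ (∀ w, H.Adj ℓ w → w = h) ∧ H.Reachable x h := by
    rcases hH hxy with hx | hy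
    · exact ⟨x, y, hxy, hx, hxy.reachable⟩
    · exact ⟨y, x, hxy.symm, hy, .refl x⟩
  have hmem {a : V} : a ∈ (H.connectedComponentMk x).supp ↔ H.Reachable h a := by
    rw [ConnectedComponent.mem_supp_iff, ConnectedComponent.eq]
    exact ⟨fun hax => hxh.symm.trans hax.symm, fun hha => (hxh.trans hha).symm⟩
  refine ⟨h, hmem.mpr .rfl, ⟨ℓ, hmem.mpr hℓh.symm.reachable, hℓh.ne⟩, ?_, ?_⟩
  · intro w hw hwh
    exact (eq_or_adj_of_reachable hH hℓh hℓ (hmem.mp hw)).resolve_left hwh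
  · intro u v hu huv
    exact eq_or_eq_of_adj hH hℓh hℓ (eq_or_adj_of_reachable hH hℓh hℓ (hmem.mp hu)) huv

end EveryEdgeHasLeaf

end SimpleGraph

/-- every connected graph on at least two vertices has a spanning
subgraph each of whose connected components is a star with at least two vertices
(a hub adjacent to all other vertices of the component, every edge incident to the hub,
and at least one vertex besides the hub). -/
theorem stmt4 {V : Type*} [Fintype V] (G : SimpleGraph V)
    (hG : G.Connected) (hn : 2 ≤ Fintype.card V) :
    ∃ H : SimpleGraph V, H ≤ G ∧
      ∀ c : H.ConnectedComponent, ∃ hub ∈ c.supp,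
        (∃ w ∈ c.supp, w ≠ hub) ∧
        (∀ w ∈ c.supp, w ≠ hub → H.Adj hub w) ∧
        (∀ u v : V, u ∈ c.supp → H.Adj u v → u = hub ∨ v = hub) := by
  have : Nontrivial V := Fintype.one_lt_card_iff_nontrivial.mp hn
  obtain ⟨H, hHG, hH⟩ := exists_minimal_le_of_wellFoundedLT
    (fun H : SimpleGraph V => ∀ v, ¬ H.IsIsolated v) G hG.preconnected.not_isIsolated
  exact ⟨H, hHG, (SimpleGraph.everyEdgeHasLeaf_of_minimal hH).exists_star_hub hH.prop⟩
end

section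
/- Let G be a simple graph with n vertices and let H be a blowup of G with m vertices. If σ' is a multiset of m − n real numbers and A ∈ S(G) is a matrix none of whose diagonal entries belongs to σ', then there exists a matrix A' ∈ S(H) whose multiset of eigenvalues equals spec(A) ∪ σ' (multiset union). -/
/-- `H` is a (closed) blowup of `G`: each vertex of `G` is replaced by a nonempty clique of
duplicates (the fibers of `f`), with two duplicates of distinct vertices adjacent exactly
when the original vertices are adjacent. -/
def IsBlowup {V W : Type*} (G : SimpleGraph V) (H : SimpleGraph W) : Prop :=
  ∃ f : W → V, Function.Surjective f ∧
    ∀ u w : W, u ≠ w → (H.Adj u w ↔ (f u = f w ∨ G.Adj (f u) (f w)))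

/-! Induction on `|σ'|`. While `H` has more vertices than `G`, two of them, `w₁` and `w₂`, are
duplicates of the same vertex, hence closed twins. Realise `spec A ∪ (σ' - {μ})` on `H - w₂`,
adjoin `w₂` as an isolated vertex with diagonal entry `μ`, and rotate the `(w₁, w₂)` coordinate
plane by `(c, s)` with `c s ≠ 0`. This orthogonal similarity splits row `w₁` into rows `w₁` and
`w₂` (scaled by `c` and `s`) and creates the entry `c s (a - μ) ≠ 0` between the twins, `a` being
the old diagonal entry at `w₁`. The new diagonal entries `c² a + s² μ` and `s² a + c² μ` vary
with `c`, so a generic rotation keeps every diagonal entry outside the finitely many eigenvalues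
still to be inserted. -/

open Matrix Polynomial

section Spectrum

variable {W T : Type*} [Fintype W] [DecidableEq W] [Fintype T] [DecidableEq T]

lemma specM_submatrix_equiv (e : W ≃ T) (A : Matrix T T ℝ) :
    specM (A.submatrix e e) = specM A := by
  simpa [specM] using congrArg roots (charpoly_reindex e.symm A)

lemma specM_fromBlocks_zero₂₁ (A : Matrix W W ℝ) (B : Matrix W T ℝ) (D : Matrix T T ℝ) :
    specM (fromBlocks A B 0 D) = specM A + specM D := by
  rw [specM, specM, specM, charpoly_fromBlocks_zero₂₁, roots_mul]
  exact mul_ne_zero (charpoly_monic A).ne_zero (charpoly_monic D).ne_zero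

lemma specM_of_unique [Unique T] (A : Matrix T T ℝ) : specM A = {A default default} := by
  rw [specM, charpoly, det_unique, charmatrix_apply_eq, roots_X_sub_C]

lemma specM_mul_mul_transpose (P : Matrix W T ℝ) (hP : P * Pᵀ = 1)
    (hcard : Fintype.card W = Fintype.card T) (D : Matrix T T ℝ) :
    specM (P * D * Pᵀ) = specM D := by
  have hPP : Pᵀ * P = 1 := (mul_eq_one_comm_of_equiv (Fintype.equivOfCardEq hcard)).mp hP
  have h := charpoly_mul_comm' P (D * Pᵀ)
  rw [Matrix.mul_assoc D, hPP, Matrix.mul_one, hcard] at h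
  rw [specM, specM, Matrix.mul_assoc, mul_left_cancel₀ (pow_ne_zero _ X_ne_zero) h]

end Spectrum

lemma exists_sq_add_sq_eq_one_avoiding {a μ : ℝ} (h : a ≠ μ) (S : Finset ℝ) :
    ∃ c s : ℝ, c ≠ 0 ∧ s ≠ 0 ∧ c ^ 2 + s ^ 2 = 1 ∧
      c ^ 2 * a + s ^ 2 * μ ∉ S ∧ s ^ 2 * a + c ^ 2 * μ ∉ S := by
  have hne : a - μ ≠ 0 := sub_ne_zero.mpr h
  obtain ⟨t, ⟨ht0, ht1⟩, ht⟩ := (Set.Ioo_infinite (zero_lt_one' ℝ)).exists_notMem_finset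
    (S.image (fun y => (y - μ) / (a - μ)) ∪ S.image (fun y => (a - y) / (a - μ)))
  have hc : √t ^ 2 = t := Real.sq_sqrt ht0.le
  have hs : √(1 - t) ^ 2 = 1 - t := Real.sq_sqrt (by linarith)
  refine ⟨√t, √(1 - t), (Real.sqrt_pos.mpr ht0).ne', (Real.sqrt_pos.mpr (by linarith)).ne',
    by linarith, fun hS => ht ?_, fun hS => ht ?_⟩
  · refine Finset.mem_union_left _ (Finset.mem_image.mpr ⟨_, hS, ?_⟩)
    rw [hc, hs]; field_simp; ring
  · refine Finset.mem_union_right _ (Finset.mem_image.mpr ⟨_, hS, ?_⟩)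
    rw [hc, hs]; field_simp; ring

lemma card_subtype_ne_add_one {W : Type*} [Fintype W] [DecidableEq W] (w₀ : W) :
    Fintype.card {w // w ≠ w₀} + 1 = Fintype.card W :=
  Fintype.card_option.symm.trans (Fintype.card_congr (Equiv.optionSubtypeNe w₀))

section Twins

variable {W : Type*} [DecidableEq W] {w₁ w₂ : W}

def twinProj (h : w₁ ≠ w₂) (x : W) : {w // w ≠ w₂} :=
  if hx : x = w₂ then ⟨w₁, h⟩ else ⟨x, hx⟩

variable (w₁ w₂) in
def twinScale (c s : ℝ) (x : W) : ℝ := if x = w₁ then c else if x = w₂ then s else 1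

variable (w₁ w₂) in
def twinVec (c s : ℝ) (x : W) : ℝ := if x = w₁ then -s else if x = w₂ then c else 0

/-- Column `inl u` is the coordinate vector of `u`, spread as `c e_{w₁} + s e_{w₂}` when
`u = w₁`; column `inr ()` is `twinVec = -s e_{w₁} + c e_{w₂}`. Up to `W ≃ {w // w ≠ w₂} ⊕ Unit`
this is the rotation of the `(w₁, w₂)` plane. -/
def twinFrame (h : w₁ ≠ w₂) (c s : ℝ) : Matrix W ({w // w ≠ w₂} ⊕ Unit) ℝ :=
  fromCols (of fun x u => if twinProj h x = u then twinScale w₁ w₂ c s x else 0)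
    (replicateCol Unit (twinVec w₁ w₂ c s))

lemma twinProj_eq_twinProj_iff (h : w₁ ≠ w₂) {x y : W} :
    twinProj h x = twinProj h y ↔ x = y ∨ (x = w₁ ∧ y = w₂) ∨ (x = w₂ ∧ y = w₁) := by
  unfold twinProj
  split_ifs with hx hy hy <;> simp [Subtype.ext_iff] <;> grind

lemma twinVec_mul_eq_zero (h : w₁ ≠ w₂) (c s : ℝ) {x y : W} (hxy : twinProj h x ≠ twinProj h y) :
    twinVec w₁ w₂ c s x * twinVec w₁ w₂ c s y = 0 := by
  rw [Ne, twinProj_eq_twinProj_iff] at hxy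
  unfold twinVec
  split_ifs <;> simp_all

lemma twinScale_ne_zero {c s : ℝ} (hc : c ≠ 0) (hs : s ≠ 0) (x : W) : twinScale w₁ w₂ c s x ≠ 0 := by
  unfold twinScale
  split_ifs <;> simp [*]

lemma adj_twinProj_iff (h : w₁ ≠ w₂) {H : SimpleGraph W}
    (htwin : ∀ x, x ≠ w₁ → x ≠ w₂ → (H.Adj w₁ x ↔ H.Adj w₂ x)) {x y : W}
    (hxy : twinProj h x ≠ twinProj h y) :
    H.Adj (twinProj h x) (twinProj h y) ↔ H.Adj x y := by
  rw [Ne, twinProj_eq_twinProj_iff] at hxy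
  unfold twinProj
  split_ifs with hx hy hy
  · simp_all
  · subst hx; exact htwin y (by tauto) hy
  · subst hy; rw [H.adj_comm, htwin x (by tauto) hx, H.adj_comm]
  · rfl

variable [Fintype W]

lemma twinFrame_mul_transpose (h : w₁ ≠ w₂) {c s : ℝ} (hcs : c ^ 2 + s ^ 2 = 1) :
    twinFrame h c s * (twinFrame h c s)ᵀ = 1 := by
  rw [twinFrame, transpose_fromCols, fromCols_mul_fromRows]
  ext x y
  simp only [Matrix.add_apply, mul_apply, of_apply, transpose_apply, replicateCol_apply,
    Fintype.sum_unique, ite_mul, zero_mul, mul_ite, mul_zero, Finset.sum_ite_eq, Finset.mem_univ,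
    if_true, twinProj_eq_twinProj_iff, one_apply, twinScale, twinVec]
  split_ifs <;> grind

def twinDup (h : w₁ ≠ w₂) (c s : ℝ) (M : Matrix {w // w ≠ w₂} {w // w ≠ w₂} ℝ) (μ : ℝ) :
    Matrix W W ℝ :=
  twinFrame h c s * Matrix.fromBlocks M 0 0 (of fun _ _ => μ : Matrix Unit Unit ℝ) *
    (twinFrame h c s)ᵀ

lemma twinDup_apply (h : w₁ ≠ w₂) (c s : ℝ) (M : Matrix {w // w ≠ w₂} {w // w ≠ w₂} ℝ)
    (μ : ℝ) (x y : W) :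
    twinDup h c s M μ x y =
      twinScale w₁ w₂ c s x * twinScale w₁ w₂ c s y * M (twinProj h x) (twinProj h y) +
        μ * (twinVec w₁ w₂ c s x * twinVec w₁ w₂ c s y) := by
  rw [twinDup, twinFrame, fromCols_mul_fromBlocks, transpose_fromCols, fromCols_mul_fromRows]
  simp [mul_apply, ite_mul, mul_ite, Finset.sum_ite_eq]
  ring

lemma twinDup_apply_fst_snd (h : w₁ ≠ w₂) (c s : ℝ) (M : Matrix {w // w ≠ w₂} {w // w ≠ w₂} ℝ)
    (μ : ℝ) : twinDup h c s M μ w₁ w₂ = c * s * (M ⟨w₁, h⟩ ⟨w₁, h⟩ - μ) := by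
  simp [twinDup_apply, twinScale, twinVec, twinProj, h, h.symm]
  ring

lemma twinDup_apply_snd_fst (h : w₁ ≠ w₂) (c s : ℝ) (M : Matrix {w // w ≠ w₂} {w // w ≠ w₂} ℝ)
    (μ : ℝ) : twinDup h c s M μ w₂ w₁ = c * s * (M ⟨w₁, h⟩ ⟨w₁, h⟩ - μ) := by
  simp [twinDup_apply, twinScale, twinVec, twinProj, h, h.symm]
  ring

lemma twinDup_apply_fst_fst (h : w₁ ≠ w₂) (c s : ℝ) (M : Matrix {w // w ≠ w₂} {w // w ≠ w₂} ℝ)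
    (μ : ℝ) : twinDup h c s M μ w₁ w₁ = c ^ 2 * M ⟨w₁, h⟩ ⟨w₁, h⟩ + s ^ 2 * μ := by
  simp [twinDup_apply, twinScale, twinVec, twinProj, h]
  ring

lemma twinDup_apply_snd_snd (h : w₁ ≠ w₂) (c s : ℝ) (M : Matrix {w // w ≠ w₂} {w // w ≠ w₂} ℝ)
    (μ : ℝ) : twinDup h c s M μ w₂ w₂ = s ^ 2 * M ⟨w₁, h⟩ ⟨w₁, h⟩ + c ^ 2 * μ := by
  simp [twinDup_apply, twinScale, twinVec, twinProj, h.symm]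
  ring

lemma twinDup_apply_self_of_ne (h : w₁ ≠ w₂) (c s : ℝ)
    (M : Matrix {w // w ≠ w₂} {w // w ≠ w₂} ℝ) (μ : ℝ) {x : W} (hx₁ : x ≠ w₁) (hx₂ : x ≠ w₂) :
    twinDup h c s M μ x x = M ⟨x, hx₂⟩ ⟨x, hx₂⟩ := by
  simp [twinDup_apply, twinScale, twinVec, twinProj, hx₁, hx₂]

lemma specM_twinDup (h : w₁ ≠ w₂) {c s : ℝ} (hcs : c ^ 2 + s ^ 2 = 1)
    (M : Matrix {w // w ≠ w₂} {w // w ≠ w₂} ℝ) (μ : ℝ) :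
    specM (twinDup h c s M μ) = specM M + {μ} := by
  have hcard : Fintype.card W = Fintype.card ({w // w ≠ w₂} ⊕ Unit) := by
    simpa using (card_subtype_ne_add_one w₂).symm
  rw [twinDup, specM_mul_mul_transpose _ (twinFrame_mul_transpose h hcs) hcard,
    specM_fromBlocks_zero₂₁, specM_of_unique (of fun _ _ => μ), of_apply]

end Twins

theorem exists_inS_specM_add_singleton_of_twins {W : Type*} [Fintype W] [DecidableEq W]
    {H : SimpleGraph W} {w₁ w₂ : W} (h12 : H.Adj w₁ w₂)
    (htwin : ∀ x, x ≠ w₁ → x ≠ w₂ → (H.Adj w₁ x ↔ H.Adj w₂ x))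
    {M : Matrix {w // w ≠ w₂} {w // w ≠ w₂} ℝ} (hM : inS (H.comap Subtype.val) M) {μ : ℝ}
    (hμ : M ⟨w₁, H.ne_of_adj h12⟩ ⟨w₁, H.ne_of_adj h12⟩ ≠ μ) {S : Finset ℝ}
    (hS : ∀ u, M u u ∉ S) :
    ∃ A : Matrix W W ℝ, inS H A ∧ specM A = specM M + {μ} ∧ ∀ w, A w w ∉ S := by
  have h := H.ne_of_adj h12
  obtain ⟨c, s, hc, hs, hcs, h₁, h₂⟩ := exists_sq_add_sq_eq_one_avoiding hμ S
  have hoff : c * s * (M ⟨w₁, h⟩ ⟨w₁, h⟩ - μ) ≠ 0 := by simp [hc, hs, sub_eq_zero, hμ]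
  refine ⟨twinDup h c s M μ, ⟨IsSymm.ext fun x y => ?_, fun x y hxy => ?_⟩,
    specM_twinDup h hcs M μ, fun w => ?_⟩
  · rw [twinDup_apply, twinDup_apply, hM.1.apply]; ring
  · by_cases hp : twinProj h x = twinProj h y
    · rcases (twinProj_eq_twinProj_iff h).1 hp with rfl | ⟨rfl, rfl⟩ | ⟨rfl, rfl⟩
      · exact absurd rfl hxy
      · exact iff_of_true (twinDup_apply_fst_snd h c s M μ ▸ hoff) h12
      · exact iff_of_true (twinDup_apply_snd_fst h c s M μ ▸ hoff) h12.symm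
    · rw [twinDup_apply, twinVec_mul_eq_zero h c s hp, mul_zero, add_zero,
        mul_ne_zero_iff_left (mul_ne_zero (twinScale_ne_zero hc hs x) (twinScale_ne_zero hc hs y)),
        hM.2 _ _ hp, SimpleGraph.comap_adj, adj_twinProj_iff h htwin hp]
  · by_cases hw₁ : w = w₁
    · rwa [hw₁, twinDup_apply_fst_fst]
    by_cases hw₂ : w = w₂
    · rwa [hw₂, twinDup_apply_snd_snd]
    · exact twinDup_apply_self_of_ne h c s M μ hw₁ hw₂ ▸ hS ⟨w, hw₂⟩

lemma inS_submatrix {V W : Type*} {G : SimpleGraph V} {H : SimpleGraph W} {A : Matrix V V ℝ}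
    (hA : inS G A) {f : W → V} (hf : Function.Injective f)
    (hadj : ∀ u w, u ≠ w → (H.Adj u w ↔ G.Adj (f u) (f w))) : inS H (A.submatrix f f) :=
  ⟨by rw [IsSymm, transpose_submatrix, hA.1.eq],
    fun u w huw => (hA.2 _ _ (hf.ne huw)).trans (hadj u w huw).symm⟩

theorem exists_inS_specM_add_of_blowup {V : Type*} [Fintype V] [DecidableEq V]
    {G : SimpleGraph V} {A : Matrix V V ℝ} (hA : inS G A) (σ : Multiset ℝ)
    (hσ : ∀ v, A v v ∉ σ) {W : Type*} [Fintype W] [DecidableEq W] (H : SimpleGraph W)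
    (f : W → V) (hf : Function.Surjective f)
    (hadj : ∀ u w, u ≠ w → (H.Adj u w ↔ (f u = f w ∨ G.Adj (f u) (f w))))
    (hcard : σ.card + Fintype.card V = Fintype.card W) (S : Finset ℝ) (hS : ∀ v, A v v ∉ S) :
    ∃ A' : Matrix W W ℝ, inS H A' ∧ specM A' = specM A + σ ∧ ∀ w, A' w w ∉ S := by
  induction σ using Multiset.induction_on generalizing W S with
  | empty =>
    have hbij : Function.Bijective f :=
      (Fintype.bijective_iff_surjective_and_card f).mpr ⟨hf, by simpa using hcard.symm⟩
    refine ⟨A.submatrix f f, inS_submatrix hA hbij.1 fun u w huw => ?_, ?_, fun w => hS (f w)⟩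
    · simpa [hbij.1.ne huw] using hadj u w huw
    · simpa using specM_submatrix_equiv (Equiv.ofBijective f hbij) A
  | cons μ σ ih =>
    obtain ⟨w₁, w₂, hne, hfeq⟩ := Fintype.exists_ne_map_eq_of_card_lt f (by simp at hcard; omega)
    have hcardU := card_subtype_ne_add_one w₂
    obtain ⟨M, hM, hspecM, hdiagM⟩ := ih (fun v hv => hσ v (Multiset.mem_cons_of_mem hv))
      (H.comap Subtype.val) (fun w : {w // w ≠ w₂} => f w)
      (fun v => by
        obtain ⟨w, rfl⟩ := hf v
        by_cases hw : w = w₂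
        · exact ⟨⟨w₁, hne⟩, hw ▸ hfeq⟩
        · exact ⟨⟨w, hw⟩, rfl⟩)
      (fun u w huw => hadj u w (Subtype.coe_ne_coe.mpr huw))
      (by simp at hcard; omega) (insert μ S)
      (fun v hv => (Finset.mem_insert.mp hv).elim
        (fun h => hσ v (h ▸ Multiset.mem_cons_self μ σ)) (hS v))
    obtain ⟨A', hA', hspec, hdiag⟩ := exists_inS_specM_add_singleton_of_twins
      ((hadj w₁ w₂ hne).mpr (Or.inl hfeq))
      (fun x hx₁ hx₂ => by rw [hadj w₁ x (Ne.symm hx₁), hadj w₂ x (Ne.symm hx₂), hfeq])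
      hM (fun h => hdiagM _ (Finset.mem_insert.mpr (Or.inl h)))
      (fun u hu => hdiagM u (Finset.mem_insert_of_mem hu))
    refine ⟨A', hA', ?_, hdiag⟩
    rw [hspec, hspecM, add_assoc, add_comm σ, Multiset.singleton_add]

/-- Lemma lem:blowup: if `H` is a blowup of `G`, `σ'` is a multiset of
`|H| - |G|` reals, and `A ∈ S(G)` has no diagonal entry in `σ'`, then some `A' ∈ S(H)`
has spectrum `spec(A) ∪ σ'`. -/
theorem stmt5 {V W : Type*} [Fintype V] [DecidableEq V] [Fintype W] [DecidableEq W]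
    (G : SimpleGraph V) (H : SimpleGraph W) (hblow : IsBlowup G H)
    (σ' : Multiset ℝ) (hcard : σ'.card + Fintype.card V = Fintype.card W)
    (A : Matrix V V ℝ) (hA : inS G A) (hdiag : ∀ i, A i i ∉ σ') :
    ∃ A' : Matrix W W ℝ, inS H A' ∧ specM A' = specM A + σ' := by
  obtain ⟨f, hf, hadj⟩ := hblow
  obtain ⟨A', hA', hspec, -⟩ :=
    exists_inS_specM_add_of_blowup hA σ' hdiag H f hf hadj hcard ∅ (by simp)
  exact ⟨A', hA', hspec⟩
end

section
/- Let A and B be real symmetric matrices having the strong spectral property with respect to graphs H_A and H_B, respectively (where H_A, H_B are graphs on the vertex sets indexing A and B). If A and B have no common eigenvalue, then the direct sum A ⊕ B has the strong spectral property with respect to the disjoint union H_A ⊕ H_B. -/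
/-- `S^cl(H)`: real symmetric matrices whose off-diagonal entries are nonzero only on
edges of `H`. -/
def inScl {V : Type*} (H : SimpleGraph V) (A : Matrix V V ℝ) : Prop :=
  A.IsSymm ∧ ∀ i j : V, i ≠ j → A i j ≠ 0 → H.Adj i j

/-- The strong spectral property with respect to a supergraph `H`: the only symmetric `X`
with `X ∈ S^cl(Hᶜ)` (i.e. `X` vanishing on the edges of `H`), `I∘X = O` and
`AX - XA = O` is `X = O`. -/
def HasSSPwrt {V : Type*} [Fintype V] (H : SimpleGraph V) (A : Matrix V V ℝ) : Prop :=
  ∀ X : Matrix V V ℝ, X.IsSymm → (∀ i j, H.Adj i j → X i j = 0) →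
    (∀ i, X i i = 0) → A * X = X * A → X = 0

/-- The disjoint union of two graphs. -/
def graphSum {V W : Type*} (G : SimpleGraph V) (H : SimpleGraph W) : SimpleGraph (V ⊕ W) :=
  SimpleGraph.map Function.Embedding.inl G ⊔ SimpleGraph.map Function.Embedding.inr H

open Polynomial

namespace Matrix

variable {n m K : Type*} [Fintype n] [DecidableEq n] [Fintype m] [DecidableEq m]

theorem aeval_mul_eq_mul_aeval_of_mul_eq_mul [CommRing K] {A : Matrix n n K}
    {B : Matrix m m K} {X : Matrix n m K} (h : A * X = X * B) (p : K[X]) :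
    aeval A p * X = X * aeval B p := by
  have hpow : ∀ k : ℕ, A ^ k * X = X * B ^ k := by
    intro k
    induction k with
    | zero => simp
    | succ k ih =>
      rw [pow_succ, pow_succ, Matrix.mul_assoc, h, ← Matrix.mul_assoc, ih, Matrix.mul_assoc]
  induction p using Polynomial.induction_on' with
  | add p q hp hq => simp only [map_add, Matrix.add_mul, Matrix.mul_add, hp, hq]
  | monomial k a =>
    simp only [aeval_monomial, ← Algebra.smul_def, Matrix.smul_mul, Matrix.mul_smul, hpow]

theorem isUnit_aeval_prod_X_sub_C [Field K] (B : Matrix m m K) (s : Multiset K)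
    (hs : ∀ μ ∈ s, μ ∉ spectrum K B) : IsUnit (aeval B (s.map (X - C ·)).prod) := by
  induction s using Multiset.induction_on with
  | empty => simp
  | cons μ s ih =>
    rw [Multiset.map_cons, Multiset.prod_cons, map_mul]
    refine IsUnit.mul ?_ (ih fun ν hν => hs ν (Multiset.mem_cons_of_mem hν))
    rw [map_sub, aeval_X, aeval_C, ← neg_sub]
    exact (spectrum.notMem_iff.mp (hs μ (Multiset.mem_cons_self μ s))).neg

theorem eq_zero_of_mul_eq_mul_of_disjoint_roots [Field K] {A : Matrix n n K} {B : Matrix m m K}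
    (hA : A.charpoly.Splits) (hdisj : ∀ μ ∈ A.charpoly.roots, μ ∉ B.charpoly.roots)
    {X : Matrix n m K} (h : A * X = X * B) : X = 0 := by
  have hM : IsUnit (aeval B A.charpoly) := by
    rw [hA.eq_prod_roots_of_monic A.charpoly_monic]
    refine isUnit_aeval_prod_X_sub_C B _ fun μ hμ => ?_
    rw [mem_spectrum_iff_isRoot_charpoly, ← mem_roots B.charpoly_monic.ne_zero]
    exact hdisj μ hμ
  have hXM : X * aeval B A.charpoly = 0 := by
    rw [← aeval_mul_eq_mul_aeval_of_mul_eq_mul h, aeval_self_charpoly, Matrix.zero_mul]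
  rw [← mul_nonsing_inv_cancel_right _ X ((isUnit_iff_isUnit_det _).mp hM), hXM, Matrix.zero_mul]

theorem IsSymm.splits_charpoly {A : Matrix n n ℝ} (hA : A.IsSymm) : A.charpoly.Splits :=
  (isHermitian_iff_isSymm.mpr hA).splits_charpoly

omit [DecidableEq n] [DecidableEq m] in
theorem fromBlocks_zero_zero_mul_comm_iff [CommRing K] {A : Matrix n n K} {B : Matrix m m K}
    {P : Matrix n n K} {Q : Matrix n m K} {R : Matrix m n K} {S : Matrix m m K} :
    fromBlocks A 0 0 B * fromBlocks P Q R S = fromBlocks P Q R S * fromBlocks A 0 0 B ↔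
      A * P = P * A ∧ A * Q = Q * B ∧ B * R = R * A ∧ B * S = S * B := by
  simp [fromBlocks_multiply, fromBlocks_inj]

end Matrix

theorem graphSum_adj_inl_inl {V W : Type*} {G : SimpleGraph V} {H : SimpleGraph W} {a b : V} :
    (graphSum G H).Adj (.inl a) (.inl b) ↔ G.Adj a b := by
  simp [graphSum]

theorem graphSum_adj_inr_inr {V W : Type*} {G : SimpleGraph V} {H : SimpleGraph W} {a b : W} :
    (graphSum G H).Adj (.inr a) (.inr b) ↔ H.Adj a b := by
  simp [graphSum]

open Matrix in
theorem stmt11_general {V W : Type*} [Fintype V] [DecidableEq V] [Fintype W] [DecidableEq W]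
    (A : Matrix V V ℝ) (B : Matrix W W ℝ) (hA : A.IsSymm)
    (HA : SimpleGraph V) (HB : SimpleGraph W)
    (hsspA : HasSSPwrt HA A) (hsspB : HasSSPwrt HB B)
    (hdisj : ∀ μ : ℝ, μ ∈ specM A → μ ∉ specM B) :
    HasSSPwrt (graphSum HA HB) (Matrix.fromBlocks A 0 0 B) := by
  intro X hX hXH hXdiag hXcomm
  obtain ⟨P, Q, R, S, rfl⟩ : ∃ P Q R S, X = fromBlocks P Q R S :=
    ⟨_, _, _, _, X.fromBlocks_toBlocks.symm⟩
  obtain ⟨hP, hQR, -, hS⟩ := isSymm_fromBlocks_iff.mp hX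
  obtain ⟨hAP, hAQ, -, hBS⟩ := fromBlocks_zero_zero_mul_comm_iff.mp hXcomm
  have hP0 : P = 0 := hsspA P hP (fun a b h => by simpa using hXH _ _ (graphSum_adj_inl_inl.2 h))
    (fun a => by simpa using hXdiag (.inl a)) hAP
  have hS0 : S = 0 := hsspB S hS (fun a b h => by simpa using hXH _ _ (graphSum_adj_inr_inr.2 h))
    (fun a => by simpa using hXdiag (.inr a)) hBS
  have hQ0 : Q = 0 := eq_zero_of_mul_eq_mul_of_disjoint_roots hA.splits_charpoly hdisj hAQ
  rw [← hQR, hP0, hQ0, hS0, transpose_zero, fromBlocks_zero]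

/-- Proposition prop:dunion: if symmetric matrices `A` and `B` have the
SSP with respect to `H_A` and `H_B` respectively and have no common eigenvalue, then
`A ⊕ B` has the SSP with respect to `H_A ⊕ H_B`. -/
theorem stmt11 {V W : Type*} [Fintype V] [DecidableEq V] [Fintype W] [DecidableEq W]
    (A : Matrix V V ℝ) (B : Matrix W W ℝ) (hA : A.IsSymm) (hB : B.IsSymm)
    (HA : SimpleGraph V) (HB : SimpleGraph W)
    (hsspA : HasSSPwrt HA A) (hsspB : HasSSPwrt HB B)
    (hdisj : ∀ μ : ℝ, μ ∈ specM A → μ ∉ specM B) :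
    HasSSPwrt (graphSum HA HB) (Matrix.fromBlocks A 0 0 B) :=
  stmt11_general A B hA HA HB hsspA hsspB hdisj
end

section
/- Let x ∈ ℝⁿ, y ∈ ℝᵐ, and α₁, α₂, β₁, β₂, γ ∈ ℝ. The (n+m) × (n+m) symmetric matrix C = [[α₁ x xᵀ + β₁ I_n, γ x yᵀ], [γ y xᵀ, α₂ y yᵀ + β₂ I_m]] has multiset of eigenvalues {μ₁, μ₂, β₁ with multiplicity n−1, β₂ with multiplicity m−1}, where μ₁ and μ₂ are the eigenvalues of the 2 × 2 matrix C' = [[α₁‖x‖² + β₁, γ‖x‖‖y‖], [γ‖x‖‖y‖, α₂‖y‖² + β₂]]. -/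
open Matrix Polynomial

theorem Polynomial.roots_mul_X_sub_C_pow {R : Type*} [CommRing R] [IsDomain R] {p : R[X]}
    (hp : p ≠ 0) (a : R) (k : ℕ) :
    (p * (X - C a) ^ k).roots = p.roots + Multiset.replicate k a := by
  rw [roots_mul (mul_ne_zero hp (pow_ne_zero _ (X_sub_C_ne_zero a))), roots_pow, roots_X_sub_C,
    Multiset.nsmul_singleton]

section
variable {K n m : Type*}

def blockCols [Zero K] (x : n → K) (y : m → K) : Matrix (n ⊕ m) (Fin 2) K :=
  fromRows (of fun i => ![x i, 0]) (of fun j => ![0, y j])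

theorem blockCols_transpose_mul_blockCols [CommRing K] [Fintype n] [Fintype m]
    (x x' : n → K) (y y' : m → K) :
    (blockCols x y)ᵀ * blockCols x' y' = !![x ⬝ᵥ x', 0; 0, y ⬝ᵥ y'] := by
  ext k l
  fin_cases k <;> fin_cases l <;> simp [blockCols, mul_apply, dotProduct]

variable [DecidableEq n] [DecidableEq m]

theorem diagonal_mul_blockCols [CommRing K] [Fintype n] [Fintype m]
    (c d : K) (x : n → K) (y : m → K) :
    (diagonal (Sum.elim (fun _ => c) fun _ => d) : Matrix (n ⊕ m) (n ⊕ m) K) * blockCols x y =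
      blockCols (c • x) (d • y) := by
  ext (i | j) k <;> fin_cases k <;> simp [blockCols]

theorem fromBlocks_eq_diagonal_add_blockCols_mul [CommRing K]
    (x : n → K) (y : m → K) (α₁ α₂ β₁ β₂ γ : K) :
    fromBlocks (α₁ • vecMulVec x x + β₁ • 1) (γ • vecMulVec x y)
        (γ • vecMulVec y x) (α₂ • vecMulVec y y + β₂ • 1) =
      diagonal (Sum.elim (fun _ => β₁) fun _ => β₂) +
        blockCols x y * !![α₁, γ; γ, α₂] * (blockCols x y)ᵀ := by
  ext (i | i) (j | j) <;>
    simp [blockCols, mul_apply, Fin.sum_univ_two, vecMulVec_apply, one_apply, diagonal_apply] <;>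
    ring

variable [Field K]

theorem det_diagonal_sub_blockCols_mul [Fintype n] [Fintype m] [Nonempty n] [Nonempty m]
    (x : n → K) (y : m → K) (α₁ α₂ γ c d : K) (hc : c ≠ 0) (hd : d ≠ 0) :
    ((diagonal (Sum.elim (fun _ => c) fun _ => d) : Matrix (n ⊕ m) (n ⊕ m) K) -
        blockCols x y * !![α₁, γ; γ, α₂] * (blockCols x y)ᵀ).det =
      c ^ (Fintype.card n - 1) * d ^ (Fintype.card m - 1) *
        ((c - α₁ * (x ⬝ᵥ x)) * (d - α₂ * (y ⬝ᵥ y)) - γ ^ 2 * (x ⬝ᵥ x) * (y ⬝ᵥ y)) := by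
  set D : Matrix (n ⊕ m) (n ⊕ m) K := diagonal (Sum.elim (fun _ => c) fun _ => d)
  set W := blockCols (c⁻¹ • x) (d⁻¹ • y)
  have hDW : D * W = blockCols x y := by
    rw [diagonal_mul_blockCols, smul_inv_smul₀ hc, smul_inv_smul₀ hd]
  have hsplit : D - blockCols x y * !![α₁, γ; γ, α₂] * (blockCols x y)ᵀ =
      D * (1 - W * (!![α₁, γ; γ, α₂] * (blockCols x y)ᵀ)) := by
    rw [Matrix.mul_sub, Matrix.mul_one, ← Matrix.mul_assoc, hDW, Matrix.mul_assoc]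
  rw [hsplit, det_mul, det_one_sub_mul_comm, Matrix.mul_assoc, blockCols_transpose_mul_blockCols]
  have hdetD : D.det = c ^ (Fintype.card n - 1) * c * (d ^ (Fintype.card m - 1) * d) := by
    rw [det_diagonal, Fintype.prod_sum_type]
    simp only [Sum.elim_inl, Sum.elim_inr, Finset.prod_const, Finset.card_univ, ← pow_succ,
      Nat.sub_add_cancel Fintype.card_pos]
  have hdet₂ (p q : K) : (1 - !![α₁, γ; γ, α₂] * !![p, 0; 0, q]).det =
      (1 - α₁ * p) * (1 - α₂ * q) - γ ^ 2 * p * q := by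
    simp only [det_fin_two, cons_mul, vecMul_cons, head_cons, tail_cons, smul_cons, smul_eq_mul,
      mul_zero, smul_empty, empty_vecMul, add_zero, add_cons, zero_add, empty_add_empty, empty_mul,
      Equiv.symm_apply_apply, Matrix.sub_apply, one_apply_eq, of_apply, cons_val', cons_val_zero,
      cons_val_fin_one, cons_val_one, ne_eq, zero_ne_one, not_false_eq_true, one_apply_ne, zero_sub,
      one_ne_zero]
    ring
  rw [hdetD, hdet₂, dotProduct_smul, dotProduct_smul, smul_eq_mul, smul_eq_mul]
  field_simp

theorem charpoly_fromBlocks_vecMulVec [Infinite K] [Fintype n] [Fintype m] [Nonempty n]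
    [Nonempty m] (x : n → K) (y : m → K) (α₁ α₂ β₁ β₂ γ g : K)
    (hg : g * g = γ ^ 2 * (x ⬝ᵥ x) * (y ⬝ᵥ y)) :
    (fromBlocks (α₁ • vecMulVec x x + β₁ • 1) (γ • vecMulVec x y)
        (γ • vecMulVec y x) (α₂ • vecMulVec y y + β₂ • 1)).charpoly =
      !![α₁ * (x ⬝ᵥ x) + β₁, g; g, α₂ * (y ⬝ᵥ y) + β₂].charpoly *
        (X - C β₁) ^ (Fintype.card n - 1) * (X - C β₂) ^ (Fintype.card m - 1) := by
  apply eq_of_infinite_eval_eq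
  refine ((Set.finite_singleton β₂).insert β₁).infinite_compl.mono fun t ht => ?_
  obtain ⟨ht₁, ht₂⟩ : t ≠ β₁ ∧ t ≠ β₂ := by simpa [not_or] using ht
  have hshift : scalar (n ⊕ m) t - diagonal (Sum.elim (fun _ => β₁) fun _ => β₂) =
      diagonal (Sum.elim (fun _ => t - β₁) fun _ => t - β₂) := by
    rw [scalar_apply, diagonal_sub]
    congr 1
    ext (i | j) <;> rfl
  rw [Set.mem_ofPred_eq, eval_charpoly, fromBlocks_eq_diagonal_add_blockCols_mul, ← sub_sub, hshift,
    det_diagonal_sub_blockCols_mul _ _ _ _ _ _ _ (sub_ne_zero.2 ht₁) (sub_ne_zero.2 ht₂),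
    charpoly_fin_two, trace_fin_two_of, det_fin_two_of]
  simp only [eval_mul, eval_add, eval_sub, eval_pow, eval_X, eval_C]
  linear_combination (t - β₁) ^ (Fintype.card n - 1) * (t - β₂) ^ (Fintype.card m - 1) * hg
end

/-- Lemma lemma:eig complete: the eigenvalues of
`C = [[α₁xxᵀ + β₁Iₙ, γxyᵀ], [γyxᵀ, α₂yyᵀ + β₂Iₘ]]` are `μ₁, μ₂, β₁^{(n-1)}, β₂^{(m-1)}`,
where `μ₁, μ₂` are the eigenvalues of
`C' = [[α₁‖x‖² + β₁, γ‖x‖‖y‖], [γ‖x‖‖y‖, α₂‖y‖² + β₂]]`. -/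
theorem stmt14 (n m : ℕ) (hn : 1 ≤ n) (hm : 1 ≤ m)
    (x : Fin n → ℝ) (y : Fin m → ℝ) (α₁ α₂ β₁ β₂ γ : ℝ) :
    specM (Matrix.fromBlocks
        (α₁ • Matrix.vecMulVec x x + β₁ • (1 : Matrix (Fin n) (Fin n) ℝ))
        (γ • Matrix.vecMulVec x y)
        (γ • Matrix.vecMulVec y x)
        (α₂ • Matrix.vecMulVec y y + β₂ • (1 : Matrix (Fin m) (Fin m) ℝ))) =
      specM !![α₁ * (∑ i, x i ^ 2) + β₁,
               γ * Real.sqrt (∑ i, x i ^ 2) * Real.sqrt (∑ i, y i ^ 2);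
               γ * Real.sqrt (∑ i, x i ^ 2) * Real.sqrt (∑ i, y i ^ 2),
               α₂ * (∑ i, y i ^ 2) + β₂] +
        Multiset.replicate (n - 1) β₁ + Multiset.replicate (m - 1) β₂ := by
  have hsq {k : ℕ} (v : Fin k → ℝ) : ∑ i, v i ^ 2 = v ⬝ᵥ v := by simp [dotProduct, sq]
  have hg : γ * √(∑ i, x i ^ 2) * √(∑ i, y i ^ 2) * (γ * √(∑ i, x i ^ 2) * √(∑ i, y i ^ 2)) =
      γ ^ 2 * (x ⬝ᵥ x) * (y ⬝ᵥ y) := by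
    have hx := Real.mul_self_sqrt (Finset.sum_nonneg fun i (_ : i ∈ Finset.univ) => sq_nonneg (x i))
    have hy := Real.mul_self_sqrt (Finset.sum_nonneg fun i (_ : i ∈ Finset.univ) => sq_nonneg (y i))
    rw [← hsq, ← hsq]
    linear_combination
      γ ^ 2 * (√(∑ i, y i ^ 2) * √(∑ i, y i ^ 2)) * hx + γ ^ 2 * (∑ i, x i ^ 2) * hy
  have : Nonempty (Fin n) := Fin.pos_iff_nonempty.mp hn
  have : Nonempty (Fin m) := Fin.pos_iff_nonempty.mp hm
  have hcharpoly := charpoly_fromBlocks_vecMulVec x y α₁ α₂ β₁ β₂ γ _ hg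
  rw [Fintype.card_fin, Fintype.card_fin, ← hsq, ← hsq] at hcharpoly
  rw [specM, specM, hcharpoly,
    roots_mul_X_sub_C_pow ((charpoly_monic _).mul ((monic_X_sub_C _).pow _)).ne_zero,
    roots_mul_X_sub_C_pow (charpoly_monic _).ne_zero]
end

section
/- Let λ₁ ≠ λ₂ be real numbers, n₁ and n₂ positive integers with n = n₁ + n₂, and let F and G be finite sets of real numbers with {λ₁, λ₂} ∩ F = ∅. Then there exists a matrix A ∈ S(K_n) whose multiset of eigenvalues is {λ₁ with multiplicity n₁, λ₂ with multiplicity n₂}, such that for every vertex v the principal submatrix A(v) has no eigenvalue in F, and no diagonal entry of A belongs to G. -/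
/-- The principal submatrix `A(w)` obtained by deleting row and column `w`. -/
def deleteRC {V : Type*} (A : Matrix V V ℝ) (w : V) :
    Matrix {i : V // i ≠ w} {i : V // i ≠ w} ℝ :=
  A.submatrix (fun i => i.1) (fun i => i.1)

/-
`A = λ₂ I + (λ₁ - λ₂) P` with `P = H E H`, where `E` is diagonal with `n₁` ones and `n₂` zeros and
`H = I - 2 w wᵀ / ‖w‖²` is a Householder reflection, has spectrum `{λ₁^(n₁), λ₂^(n₂)}`. Since `P` is
idempotent, `(x I - A)⁻¹ = α I + β P`, and the principal minors of `x I - A` are diagonal entries of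
its adjugate; hence every eigenvalue of `A(v)` is `λ₁`, `λ₂` or `λ₁ - (λ₁ - λ₂) P v v`.
For `w = (1, t, t², …)` the off-diagonal entries of `P`, and `P v v - s` for any `s`, are rational
functions of `t` that do not vanish identically, so a `t` off finitely many roots makes `A ∈ S(Kₙ)` and moves every
`P v v` off the finite set that would put an eigenvalue of `A(v)` in `F` or `A v v` in `G`.
-/

open Polynomial Matrix

section Resolvent

variable {V : Type*} [Fintype V] [DecidableEq V]

theorem det_deleteRC_eq_adjugate (M : Matrix V V ℝ) (v : V) :
    (deleteRC M v).det = M.adjugate v v := by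
  let e := Equiv.sumCompl (· ≠ v)
  have hblocks : (M.updateRow v (Pi.single v 1)).submatrix e e =
      fromBlocks (deleteRC M v) (of fun i _ => M i v) 0 1 := by
    ext (⟨i, hi⟩ | ⟨i, hi⟩) (⟨j, hj⟩ | ⟨j, hj⟩)
    · simp [e, deleteRC, updateRow_ne hi]
    · obtain rfl : j = v := not_not.mp hj
      simp [e, updateRow_ne hi]
    · obtain rfl : i = v := not_not.mp hi
      simp [e, hj]
    · obtain rfl : i = v := not_not.mp hi
      obtain rfl : j = i := not_not.mp hj
      simp [e]
  rw [adjugate_apply, ← det_submatrix_equiv_self e, hblocks, det_fromBlocks_zero₂₁, det_one,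
    mul_one]

theorem eval_charpoly_deleteRC (A : Matrix V V ℝ) (v : V) (x : ℝ) :
    (deleteRC A v).charpoly.eval x = (scalar V x - A).adjugate v v := by
  rw [eval_charpoly, ← det_deleteRC_eq_adjugate]
  congr 1
  ext i j
  simp [deleteRC, diagonal_apply, Subtype.ext_iff]

theorem adjugate_eq_det_smul_of_mul_eq_one {M N : Matrix V V ℝ} (h : M * N = 1) :
    M.adjugate = M.det • N := by
  rw [← inv_eq_right_inv h, inv_def, smul_smul,
    Ring.mul_inverse_cancel _ (isUnit_det_of_right_inverse h), one_smul]

theorem sub_mul_resolvent_of_isIdempotentElem {P : Matrix V V ℝ} (hP : IsIdempotentElem P)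
    {a b x : ℝ} (ha : x ≠ a) (hb : x ≠ b) :
    (scalar V x - (a • 1 + (b - a) • P)) *
      ((x - a)⁻¹ • 1 + ((b - a) / ((x - a) * (x - b))) • P) = 1 := by
  have ha' : x - a ≠ 0 := sub_ne_zero.mpr ha
  have hb' : x - b ≠ 0 := sub_ne_zero.mpr hb
  simp only [scalar_apply, ← smul_one_eq_diagonal, sub_mul, add_mul, mul_add, Matrix.smul_mul,
    Matrix.mul_smul, one_mul, mul_one, hP.eq, smul_smul]
  match_scalars
  · field_simp
  · field_simp
    ring

theorem eq_or_eq_or_eq_of_mem_specM_deleteRC {P : Matrix V V ℝ} (hP : IsIdempotentElem P)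
    {a b μ : ℝ} (v : V) (hμ : μ ∈ specM (deleteRC (a • 1 + (b - a) • P) v)) :
    μ = a ∨ μ = b ∨ μ = b - (b - a) * P v v := by
  by_contra! h
  obtain ⟨ha, hb, hv⟩ := h
  have hinv := sub_mul_resolvent_of_isIdempotentElem hP ha hb
  have hroot : (deleteRC (a • 1 + (b - a) • P) v).charpoly.eval μ = 0 :=
    (mem_roots (charpoly_monic _).ne_zero).mp hμ
  rw [eval_charpoly_deleteRC, adjugate_eq_det_smul_of_mul_eq_one hinv] at hroot
  have hdet := det_ne_zero_of_right_inverse hinv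
  have ha' : μ - a ≠ 0 := sub_ne_zero.mpr ha
  have hb' : μ - b ≠ 0 := sub_ne_zero.mpr hb
  have hv' : μ - b + (b - a) * P v v ≠ 0 := fun h => hv (by linarith)
  simp only [Matrix.smul_apply, Matrix.add_apply, one_apply_eq, smul_eq_mul, mul_eq_zero, hdet,
    false_or] at hroot
  field_simp at hroot
  exact hv' (by linear_combination hroot)

end Resolvent

section Householder

variable {ι : Type*} [Fintype ι] [DecidableEq ι]

theorem specM_mul_diagonal_mul_of_mul_self_eq_one {Q : Matrix ι ι ℝ} (hQ : Q * Q = 1)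
    (d : ι → ℝ) : specM (Q * diagonal d * Q) = Finset.univ.val.map d := by
  have hconj := charpoly_units_conj ⟨Q, Q, hQ, hQ⟩ (diagonal d)
  rw [Units.val_mk, inv_eq_right_inv hQ] at hconj
  rw [specM, hconj, charpoly_diagonal,
    roots_prod _ _ (Finset.prod_ne_zero_iff.mpr fun i _ => X_sub_C_ne_zero (d i))]
  simp

noncomputable def householder (w : ι → ℝ) : Matrix ι ι ℝ :=
  1 - (2 / (w ⬝ᵥ w)) • vecMulVec w w

theorem householder_isSymm (w : ι → ℝ) : (householder w).IsSymm := by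
  simp [householder, IsSymm, transpose_sub, transpose_smul, transpose_vecMulVec]

theorem householder_mul_self {w : ι → ℝ} (hw : w ⬝ᵥ w ≠ 0) :
    householder w * householder w = 1 := by
  simp only [householder, sub_mul, mul_sub, one_mul, mul_one, Matrix.smul_mul, Matrix.mul_smul,
    vecMulVec_mul_vecMulVec, vecMulVec_smul, smul_smul]
  rw [div_mul_cancel₀ 2 hw]
  module

theorem householder_mul_diagonal_mul_apply (w e : ι → ℝ) (i j : ι) :
    (householder w * diagonal e * householder w) i j =
      diagonal e i j - 2 / (w ⬝ᵥ w) * (e i + e j) * (w i * w j) +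
        (2 / (w ⬝ᵥ w)) ^ 2 * (∑ k, e k * w k ^ 2) * (w i * w j) := by
  simp only [householder, mul_apply, Matrix.sub_apply, one_apply, Matrix.smul_apply,
    vecMulVec_apply, smul_eq_mul, diagonal_apply]
  simp only [mul_ite, sub_mul, ite_mul, one_mul, zero_mul, mul_zero, Finset.sum_ite_eq',
    Finset.mem_univ, ↓reduceIte, mul_sub, mul_one, Finset.sum_sub_distrib, Finset.sum_ite_eq,
    Finset.mul_sum, Finset.sum_mul]
  rw [Finset.sum_congr rfl fun k _ => (by ring : 2 / w ⬝ᵥ w * (w i * w k) * e k *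
    (2 / w ⬝ᵥ w * (w k * w j)) = (2 / w ⬝ᵥ w) ^ 2 * (e k * w k ^ 2) * (w i * w j))]
  obtain rfl | hij := eq_or_ne i j
  · simp only [if_true]
    ring
  · simp only [hij, if_false]
    ring

theorem householder_mul_diagonal_mul_apply_ne_zero {w e : ι → ℝ} (he : ∀ k, e k = 0 ∨ e k = 1)
    (hw : ∀ k, w k ≠ 0) (hs₀ : ∑ k, e k * w k ^ 2 ≠ 0) (hs₁ : ∑ k, e k * w k ^ 2 ≠ w ⬝ᵥ w)
    (hs₂ : 2 * ∑ k, e k * w k ^ 2 ≠ w ⬝ᵥ w) {i j : ι} (hij : i ≠ j) :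
    (householder w * diagonal e * householder w) i j ≠ 0 := by
  set s := ∑ k, e k * w k ^ 2
  have hW : w ⬝ᵥ w ≠ 0 :=
    (Finset.sum_pos (fun k _ => mul_self_pos.mpr (hw k)) ⟨i, Finset.mem_univ i⟩).ne'
  have hkey : 2 * s - (e i + e j) * w ⬝ᵥ w ≠ 0 := by
    rcases he i with hi | hi <;> rcases he j with hj | hj <;> rw [hi, hj]
    · simpa using hs₀
    · simpa [sub_eq_zero] using hs₂
    · simpa [sub_eq_zero] using hs₂
    · exact fun h => hs₁ (by linarith)
  rw [householder_mul_diagonal_mul_apply, diagonal_apply_ne _ hij]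
  rw [show 0 - 2 / w ⬝ᵥ w * (e i + e j) * (w i * w j) + (2 / w ⬝ᵥ w) ^ 2 * s * (w i * w j) =
      2 * (w i * w j) * (2 * s - (e i + e j) * w ⬝ᵥ w) / (w ⬝ᵥ w) ^ 2 by field_simp; ring]
  exact div_ne_zero (mul_ne_zero (mul_ne_zero two_ne_zero (mul_ne_zero (hw i) (hw j))) hkey)
    (pow_ne_zero 2 hW)

theorem isIdempotentElem_mul_mul_of_mul_self_eq_one {M : Type*} [Monoid M] {q p : M}
    (hq : q * q = 1) (hp : IsIdempotentElem p) : IsIdempotentElem (q * p * q) := by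
  rw [IsIdempotentElem, show q * p * q * (q * p * q) = q * (p * (q * q) * p) * q by
    simp only [mul_assoc], hq, mul_one, hp.eq]

theorem mul_diagonal_mul_of_mul_self_eq_one {Q : Matrix ι ι ℝ} (hQ : Q * Q = 1) (a c : ℝ)
    (e : ι → ℝ) : Q * diagonal (fun k => a + c * e k) * Q = a • 1 + c • (Q * diagonal e * Q) := by
  rw [show diagonal (fun k => a + c * e k) = a • 1 + c • diagonal e by
      ext i j; by_cases h : i = j <;> simp [h],
    mul_add, add_mul, Matrix.mul_smul, Matrix.smul_mul, mul_one, hQ, Matrix.mul_smul,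
    Matrix.smul_mul]

theorem isIdempotentElem_diagonal {e : ι → ℝ} (he : ∀ k, e k = 0 ∨ e k = 1) :
    IsIdempotentElem (diagonal e) := by
  rw [IsIdempotentElem, diagonal_mul_diagonal]
  congr 1
  funext k
  rcases he k with h | h <;> simp [h]

theorem Matrix.IsSymm.mul_diagonal_mul {Q : Matrix ι ι ℝ} (hQ : Q.IsSymm) (d : ι → ℝ) :
    (Q * diagonal d * Q).IsSymm := by
  simp [IsSymm, transpose_mul, hQ.eq, Matrix.mul_assoc]

end Householder

theorem inS_top_smul_one_add_smul {ι : Type*} [DecidableEq ι] {P : Matrix ι ι ℝ} (hP : P.IsSymm)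
    (hoff : ∀ i j, i ≠ j → P i j ≠ 0) (a : ℝ) {c : ℝ} (hc : c ≠ 0) :
    inS ⊤ (a • 1 + c • P) :=
  ⟨(isSymm_one.smul a).add (hP.smul c), fun i j hij => by simp [hij, hc, hoff i j hij]⟩

section GenericParameter

variable {n : ℕ}

noncomputable def evenPoly (n : ℕ) (c : Fin n → ℝ) : ℝ[X] :=
  ∑ k, C (c k) * X ^ (2 * (k : ℕ))

def powVec (n : ℕ) (t : ℝ) : Fin n → ℝ := fun k => t ^ (k : ℕ)

theorem eval_evenPoly (c : Fin n → ℝ) (t : ℝ) :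
    (evenPoly n c).eval t = ∑ k, c k * powVec n t k ^ 2 := by
  simp [evenPoly, eval_finsetSum, powVec, pow_mul']

theorem eval_evenPoly_one (t : ℝ) :
    (evenPoly n 1).eval t = powVec n t ⬝ᵥ powVec n t := by
  simp [eval_evenPoly, dotProduct, sq]

theorem coeff_evenPoly (c : Fin n → ℝ) (k : Fin n) : (evenPoly n c).coeff (2 * k) = c k := by
  simp [evenPoly, finsetSum_coeff, Fin.val_inj]

theorem eval_zero_evenPoly (c : Fin n → ℝ) (h : 0 < n) : (evenPoly n c).eval 0 = c ⟨0, h⟩ := by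
  rw [← coeff_zero_eq_eval_zero]
  exact coeff_evenPoly c ⟨0, h⟩

theorem evenPoly_ne_zero {c : Fin n → ℝ} {k : Fin n} (hk : c k ≠ 0) : evenPoly n c ≠ 0 :=
  fun h => hk (by rw [← coeff_evenPoly c k, h, coeff_zero])

noncomputable def diagSubPoly (e : Fin n → ℝ) (i : Fin n) (s : ℝ) : ℝ[X] :=
  C (e i - s) * evenPoly n 1 ^ 2 + C 4 * X ^ (2 * (i : ℕ)) * evenPoly n (fun k => e k - e i)

theorem eval_diagSubPoly (e : Fin n → ℝ) (i : Fin n) (s t : ℝ)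
    (hW : powVec n t ⬝ᵥ powVec n t ≠ 0) :
    (diagSubPoly e i s).eval t = (powVec n t ⬝ᵥ powVec n t) ^ 2 *
      ((householder (powVec n t) * diagonal e * householder (powVec n t)) i i - s) := by
  have hsum : ∑ k, (e k - e i) * powVec n t k ^ 2 =
      ∑ k, e k * powVec n t k ^ 2 - e i * (powVec n t ⬝ᵥ powVec n t) := by
    simp [sub_mul, Finset.sum_sub_distrib, Finset.mul_sum, dotProduct, sq]
  rw [householder_mul_diagonal_mul_apply, diagonal_apply_eq]
  simp only [diagSubPoly, eval_add, eval_mul, eval_C, eval_pow, eval_X]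
  rw [eval_evenPoly_one, eval_evenPoly, hsum]
  rw [show t ^ (2 * (i : ℕ)) = powVec n t i * powVec n t i by simp [powVec, pow_mul', sq]]
  field_simp
  ring

theorem diagSubPoly_ne_zero {e : Fin n → ℝ} {i : Fin n} (he : ∃ k, e k ≠ e i) (s : ℝ) :
    diagSubPoly e i s ≠ 0 := by
  obtain rfl | hs := eq_or_ne s (e i)
  · obtain ⟨k, hk⟩ := he
    simpa [diagSubPoly] using evenPoly_ne_zero (c := fun k => e k - e i) (sub_ne_zero.mpr hk)
  · intro h
    have h0 := congrArg (eval 0) h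
    simp only [diagSubPoly, eval_add, eval_mul, eval_C, eval_pow, eval_X,
      eval_zero_evenPoly _ i.pos, Pi.one_apply, eval_zero] at h0
    obtain hi | hi := eq_or_ne (i : ℕ) 0
    · rw [show (⟨0, i.pos⟩ : Fin n) = i from (Fin.ext hi).symm] at h0
      exact hs (by linarith)
    · rw [zero_pow (by omega)] at h0
      exact hs (by linarith)

theorem exists_forall_eval_ne_zero (ps : Finset ℝ[X]) (hps : ∀ p ∈ ps, p ≠ 0) :
    ∃ t : ℝ, ∀ p ∈ ps, p.eval t ≠ 0 := by
  by_contra! h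
  refine Finset.prod_ne_zero_iff.mpr hps (Polynomial.funext fun t => ?_)
  obtain ⟨p, hp, hpt⟩ := h t
  rw [eval_prod, eval_zero]
  exact Finset.prod_eq_zero hp hpt

end GenericParameter

theorem exists_householder_mul_diagonal_mul_generic {n : ℕ} {e : Fin n → ℝ}
    (he : ∀ k, e k = 0 ∨ e k = 1) {k₀ k₁ : Fin n} (hk₀ : e k₀ = 0) (hk₁ : e k₁ = 1)
    (S : Finset ℝ) :
    ∃ w : Fin n → ℝ, w ⬝ᵥ w ≠ 0 ∧
      (∀ i j, i ≠ j → (householder w * diagonal e * householder w) i j ≠ 0) ∧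
      ∀ i, (householder w * diagonal e * householder w) i i ∉ S := by
  have hne : ∀ i, ∃ k, e k ≠ e i := fun i => by
    rcases he i with h | h
    · exact ⟨k₁, by rw [hk₁, h]; exact one_ne_zero⟩
    · exact ⟨k₀, by rw [hk₀, h]; exact zero_ne_one⟩
  let ps : Finset ℝ[X] :=
    {X, evenPoly n 1, evenPoly n e, evenPoly n 1 - evenPoly n e,
      C 2 * evenPoly n e - evenPoly n 1} ∪
      (Finset.univ ×ˢ S).image fun q => diagSubPoly e q.1 q.2
  have hps : ∀ p ∈ ps, p ≠ 0 := by
    simp only [ps, Finset.mem_union, Finset.mem_insert, Finset.mem_singleton, Finset.mem_image]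
    rintro p ((rfl | rfl | rfl | rfl | rfl) | ⟨⟨i, s⟩, -, rfl⟩)
    · exact X_ne_zero
    · exact evenPoly_ne_zero (k := k₀) one_ne_zero
    · exact evenPoly_ne_zero (k := k₁) (by rw [hk₁]; exact one_ne_zero)
    · intro h
      simpa [coeff_evenPoly, hk₀] using congrArg (coeff · (2 * k₀)) h
    · intro h
      simpa [coeff_evenPoly, hk₀] using congrArg (coeff · (2 * k₀)) h
    · exact diagSubPoly_ne_zero (hne i) s
  obtain ⟨t, ht⟩ := exists_forall_eval_ne_zero ps hps
  have hW : powVec n t ⬝ᵥ powVec n t ≠ 0 := by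
    simpa [eval_evenPoly_one] using ht (evenPoly n 1) (by simp [ps])
  have hw : ∀ k, powVec n t k ≠ 0 := fun k => pow_ne_zero _ (by simpa using ht X (by simp [ps]))
  refine ⟨powVec n t, hW, fun i j hij =>
    householder_mul_diagonal_mul_apply_ne_zero he hw ?_ ?_ ?_ hij, fun i hi => ?_⟩
  · have := ht (evenPoly n e) (by simp [ps])
    rwa [eval_evenPoly] at this
  · have := ht (evenPoly n 1 - evenPoly n e) (by simp [ps])
    rw [eval_sub, eval_evenPoly_one, eval_evenPoly] at this
    exact fun h => this (by rw [h, sub_self])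
  · have := ht (C 2 * evenPoly n e - evenPoly n 1) (by simp [ps])
    rw [eval_sub, eval_mul, eval_C, eval_evenPoly_one, eval_evenPoly] at this
    exact fun h => this (by rw [h, sub_self])
  · refine ht (diagSubPoly e i _) ?_ (by rw [eval_diagSubPoly _ _ _ _ hW, sub_self, mul_zero])
    exact Finset.mem_union_right _ (Finset.mem_image.mpr ⟨(i, _), by simpa using hi, rfl⟩)

theorem map_univ_val_fin_append_const {m n : ℕ} (x y : ℝ) :
    Finset.univ.val.map (Fin.append (fun _ : Fin m => x) (fun _ : Fin n => y)) =
      Multiset.replicate m x + Multiset.replicate n y := by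
  simp [List.ofFn_fin_append, List.ofFn_const, ← Multiset.coe_add, Multiset.coe_replicate]

/-- Corollary cor:two distinct: for reals `λ₁ ≠ λ₂`, positive integers
`n₁, n₂` with `n = n₁ + n₂`, and finite sets `F, G` of reals with `λ₁, λ₂ ∉ F`, there is
`A ∈ S(Kₙ)` with spectrum `{λ₁^{(n₁)}, λ₂^{(n₂)}}` such that no `A(v)` has an eigenvalue
in `F` and no diagonal entry of `A` lies in `G`. -/
theorem stmt15 (lam₁ lam₂ : ℝ) (hne : lam₁ ≠ lam₂)
    (n₁ n₂ : ℕ) (h1 : 0 < n₁) (h2 : 0 < n₂)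
    (F Gs : Finset ℝ) (hF1 : lam₁ ∉ F) (hF2 : lam₂ ∉ F) :
    ∃ A : Matrix (Fin (n₁ + n₂)) (Fin (n₁ + n₂)) ℝ,
      inS (⊤ : SimpleGraph (Fin (n₁ + n₂))) A ∧
      specM A = Multiset.replicate n₁ lam₁ + Multiset.replicate n₂ lam₂ ∧
      (∀ v : Fin (n₁ + n₂), ∀ μ ∈ F, μ ∉ specM (deleteRC A v)) ∧
      ∀ i, A i i ∉ Gs := by
  set c := lam₁ - lam₂
  have hc : c ≠ 0 := sub_ne_zero.mpr hne
  set e : Fin (n₁ + n₂) → ℝ := Fin.append (fun _ : Fin n₁ => 1) (fun _ : Fin n₂ => 0)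
  have he : ∀ k, e k = 0 ∨ e k = 1 := fun k => by induction k using Fin.addCases <;> simp [e]
  obtain ⟨w, hW, hoff, hdiag⟩ := exists_householder_mul_diagonal_mul_generic he
    (k₀ := Fin.natAdd n₁ ⟨0, h2⟩) (k₁ := Fin.castAdd n₂ ⟨0, h1⟩)
    (by simp only [e, Fin.append_right]) (by simp only [e, Fin.append_left])
    (F.image (fun μ => (lam₁ - μ) / c) ∪ Gs.image (fun g => (g - lam₂) / c))
  have hH := householder_mul_self hW
  set P := householder w * diagonal e * householder w
  refine ⟨lam₂ • 1 + c • P, inS_top_smul_one_add_smul ((householder_isSymm w).mul_diagonal_mul e)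
    hoff lam₂ hc, ?_, fun v μ hμ hmem => ?_, fun i hi => hdiag i ?_⟩
  · rw [← mul_diagonal_mul_of_mul_self_eq_one hH, specM_mul_diagonal_mul_of_mul_self_eq_one hH,
      show (fun k => lam₂ + c * e k) = (fun x => lam₂ + c * x) ∘ e from rfl,
      ← Multiset.map_map, map_univ_val_fin_append_const]
    simp [c]
  · rcases eq_or_eq_or_eq_of_mem_specM_deleteRC (isIdempotentElem_mul_mul_of_mul_self_eq_one hH
      (isIdempotentElem_diagonal he))
      v hmem with rfl | rfl | rfl
    · exact hF2 hμ
    · exact hF1 hμ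
    · exact hdiag v (Finset.mem_union_left _ (Finset.mem_image.mpr ⟨_, hμ, by field_simp; ring⟩))
  · exact Finset.mem_union_right _ (Finset.mem_image.mpr ⟨_, hi, by
    simp only [Matrix.add_apply, Matrix.smul_apply, one_apply_eq, smul_eq_mul, mul_one,
      add_sub_cancel_left]
    field_simp⟩)
end

section
/- For n ≥ 4, the (n+1) × (n+1) symmetric matrix A = [[0, 1ᵀ], [1, O_{n,n}]] ∈ S(K_{1,n}) (whose graph is the star with center the first vertex) does not have the strong spectral property, but A has the strong spectral property with respect to the graph H obtained from the complete graph K_{n+1} on its vertex set by deleting the path of edges {2,3}, {3,4}, …, {n, n+1}. -/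
/-- The star `K_{1,n}` on `n + 1` vertices, with center the vertex `0`. -/
def starGraph (n : ℕ) : SimpleGraph (Fin (n + 1)) :=
  SimpleGraph.fromRel (fun i j => i = 0 ∨ j = 0)

/-- The matrix `A = [[0, 1ᵀ], [1, O]]` whose graph is `K_{1,n}`. -/
def starA (n : ℕ) : Matrix (Fin (n + 1)) (Fin (n + 1)) ℝ :=
  Matrix.of fun i j => if (i = 0 ∧ j ≠ 0) ∨ (i ≠ 0 ∧ j = 0) then 1 else 0

/-- The graph obtained from the complete graph `K_{n+1}` by deleting the path of edges
`{1,2}, {2,3}, …, {n-1,n}` among the leaves (in 0-indexed labels; these are the edges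
`{2,3}, …, {n,n+1}` in the paper's 1-indexed labels). -/
def Hgraph (n : ℕ) : SimpleGraph (Fin (n + 1)) :=
  SimpleGraph.fromRel (fun i j =>
    ¬ ((1 ≤ i.val ∧ i.val + 1 = j.val) ∨ (1 ≤ j.val ∧ j.val + 1 = i.val)))

/-!
A symmetric `X` vanishing on the row and column of the center commutes with `A` iff all its
column sums vanish, because `A` acts by `v ↦ (∑ᵢ vᵢ - v₀, v₀, …, v₀)`. For `n ≥ 4`,
`X = v wᵀ + w vᵀ` with `v = e₁ - e₄` and `w = e₂ - e₃` is such a matrix, with zero diagonal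
because `v` and `w` have disjoint supports, so the SSP fails. With respect to `H`, `X` is
supported on the path `1 - 2 - ⋯ - n` among the leaves, and the vanishing column sums kill its
entries one after another along the path.
-/

open Matrix

section SSP

variable {V : Type*} [Fintype V] {A : Matrix V V ℝ}

theorem not_hasSSP_of_mulVec_eq_zero (hA : A.IsSymm) {v w : V → ℝ}
    (hAv : A *ᵥ v = 0) (hAw : A *ᵥ w = 0) (hv : v ≠ 0) (hw : w ≠ 0)
    (hvw : ∀ i, v i * w i = 0)
    (hAX : ∀ i j, A i j * (vecMulVec v w + vecMulVec w v) i j = 0) :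
    ¬ HasSSP A := by
  intro hSSP
  obtain ⟨i, hvi⟩ := Function.ne_iff.mp hv
  obtain ⟨j, hwj⟩ := Function.ne_iff.mp hw
  have hwi : w i = 0 := (mul_eq_zero.mp (hvw i)).resolve_left hvi
  have hXA : ∀ x y : V → ℝ, A *ᵥ y = 0 → vecMulVec x y * A = 0 := fun x y hy => by
    rw [vecMulVec_mul, ← hA.eq, vecMul_transpose, hy, vecMulVec_zero]
  have hX := hSSP (vecMulVec v w + vecMulVec w v)
    (by simp [IsSymm, transpose_add, transpose_vecMulVec, add_comm]) hAX
    (fun k => by simp [vecMulVec_apply, hvw k, mul_comm (w k)])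
    (by simp [mul_add, add_mul, mul_vecMulVec, hAv, hAw, hXA v w hAw, hXA w v hAv])
  have hXij := congrFun (congrFun hX i) j
  simp only [Matrix.add_apply, vecMulVec_apply, hwi, zero_mul, add_zero, Matrix.zero_apply] at hXij
  exact mul_ne_zero hvi hwj hXij

end SSP

section Path

variable {n : ℕ}

theorem eq_zero_of_path_support_of_colSum {X : Matrix (Fin (n + 1)) (Fin (n + 1)) ℝ}
    (hX : X.IsSymm)
    (hsupp : ∀ i j : Fin (n + 1),
      ¬ ((1 ≤ i.val ∧ i.val + 1 = j.val) ∨ (1 ≤ j.val ∧ j.val + 1 = i.val)) → X i j = 0)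
    (hcol : ∀ j, ∑ k, X k j = 0) : X = 0 := by
  have hpath : ∀ k (hk : k + 1 ≤ n), X ⟨k, by omega⟩ ⟨k + 1, by omega⟩ = 0 := by
    intro k
    induction k with
    | zero => exact fun _ => hsupp _ _ (by simp)
    | succ k ih =>
      intro hk
      have hsum : ∑ m, X m ⟨k + 1, by omega⟩ =
          X ⟨k, by omega⟩ ⟨k + 1, by omega⟩ + X ⟨k + 2, by omega⟩ ⟨k + 1, by omega⟩ :=
        Fintype.sum_eq_add _ _ (by simp) fun m hm =>
          hsupp _ _ (by simp only [ne_eq, Fin.ext_iff] at hm ⊢; omega)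
      rw [hX.apply]
      linarith [hcol ⟨k + 1, by omega⟩, ih (by omega)]
  ext ⟨i, hi⟩ ⟨j, hj⟩
  rw [Matrix.zero_apply]
  by_cases h : (1 ≤ i ∧ i + 1 = j) ∨ (1 ≤ j ∧ j + 1 = i)
  · rcases h with ⟨-, rfl⟩ | ⟨-, rfl⟩
    · exact hpath i (by omega)
    · rw [← hX.apply]
      exact hpath j (by omega)
  · exact hsupp _ _ h

end Path

section Star

variable {n : ℕ}

theorem starA_isSymm (n : ℕ) : (starA n).IsSymm := by
  ext i j
  simp only [transpose_apply, starA, of_apply]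
  exact if_congr (by tauto) rfl rfl

theorem starA_inS (n : ℕ) : inS (starGraph n) (starA n) := by
  refine ⟨starA_isSymm n, fun i j hij => ?_⟩
  by_cases hi : i = 0 <;> by_cases hj : j = 0 <;>
    simp_all [starA, starGraph, SimpleGraph.fromRel_adj]

theorem starA_row_zero : starA n 0 = 1 - Pi.single 0 1 := by
  ext k
  by_cases hk : k = 0 <;> simp [starA, hk]

theorem starA_row_of_ne_zero {i : Fin (n + 1)} (hi : i ≠ 0) : starA n i = Pi.single 0 1 := by
  ext k
  by_cases hk : k = 0 <;> simp [starA, hi, hk]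

theorem starA_apply_of_ne_zero {i j : Fin (n + 1)} (hi : i ≠ 0) (hj : j ≠ 0) :
    starA n i j = 0 := by
  simp [starA_row_of_ne_zero hi, hj]

theorem starA_row_zero_dotProduct (v : Fin (n + 1) → ℝ) :
    starA n 0 ⬝ᵥ v = ∑ k, v k - v 0 := by
  rw [starA_row_zero, sub_dotProduct, one_dotProduct, single_dotProduct, one_mul]

theorem starA_mulVec_eq_zero {v : Fin (n + 1) → ℝ} (h0 : v 0 = 0) (hsum : ∑ k, v k = 0) :
    starA n *ᵥ v = 0 := by
  ext i
  by_cases hi : i = 0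
  · simp [mulVec, hi, starA_row_zero_dotProduct, h0, hsum]
  · simp [mulVec, starA_row_of_ne_zero hi, h0]

theorem starA_not_hasSSP_of_mulVec {v w : Fin (n + 1) → ℝ} (hv₀ : v 0 = 0) (hw₀ : w 0 = 0)
    (hv : ∑ k, v k = 0) (hw : ∑ k, w k = 0) (hv_ne : v ≠ 0) (hw_ne : w ≠ 0)
    (hvw : ∀ i, v i * w i = 0) : ¬ HasSSP (starA n) := by
  refine not_hasSSP_of_mulVec_eq_zero (starA_isSymm n) (starA_mulVec_eq_zero hv₀ hv)
    (starA_mulVec_eq_zero hw₀ hw) hv_ne hw_ne hvw fun i j => ?_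
  by_cases hi : i = 0
  · simp [hi, vecMulVec_apply, hv₀, hw₀]
  by_cases hj : j = 0
  · simp [hj, vecMulVec_apply, hv₀, hw₀]
  rw [starA_apply_of_ne_zero hi hj, zero_mul]

theorem starA_not_hasSSP (hn : 4 ≤ n) : ¬ HasSSP (starA n) := by
  let e (k : ℕ) (hk : k ≤ n) : Fin (n + 1) → ℝ := Pi.single ⟨k, by omega⟩ 1
  have he (k : ℕ) (hk : k ≤ n) (i : Fin (n + 1)) : e k hk i = if i.val = k then 1 else 0 := by
    simp [e, Pi.single_apply, Fin.ext_iff]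
  apply starA_not_hasSSP_of_mulVec (v := e 1 (by omega) - e 4 hn)
    (w := e 2 (by omega) - e 3 (by omega))
  · simp [he]
  · simp [he]
  · simp [e]
  · simp [e]
  · exact Function.ne_iff.mpr ⟨⟨1, by omega⟩, by simp [he]⟩
  · exact Function.ne_iff.mpr ⟨⟨2, by omega⟩, by simp [he]⟩
  · intro i
    simp only [Pi.sub_apply, he]
    split_ifs <;> first | omega | norm_num

theorem colSum_eq_zero_of_starA_mul_eq {X : Matrix (Fin (n + 1)) (Fin (n + 1)) ℝ}
    (hX₀ : ∀ k, X 0 k = 0) (hcomm : starA n * X = X * starA n) (j : Fin (n + 1)) :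
    ∑ k, X k j = 0 := by
  have h := congrFun (congrFun hcomm 0) j
  rw [mul_apply', starA_row_zero_dotProduct, hX₀, sub_zero, mul_apply] at h
  simpa [hX₀] using h

theorem starA_hasSSPwrt_Hgraph (n : ℕ) : HasSSPwrt (Hgraph n) (starA n) := by
  intro X hX hH hdiag hcomm
  have hsupp : ∀ i j : Fin (n + 1),
      ¬ ((1 ≤ i.val ∧ i.val + 1 = j.val) ∨ (1 ≤ j.val ∧ j.val + 1 = i.val)) → X i j = 0 := by
    intro i j h
    obtain rfl | hij := eq_or_ne i j
    · exact hdiag i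
    · exact hH i j ⟨hij, Or.inl h⟩
  refine eq_zero_of_path_support_of_colSum hX hsupp
    (colSum_eq_zero_of_starA_mul_eq (fun k => hsupp 0 k ?_) hcomm)
  simp

end Star

/-- for `n ≥ 4`, the matrix `A = [[0, 1ᵀ], [1, O]] ∈ S(K_{1,n})` does
not have the SSP, but it has the SSP with respect to the graph `H` obtained from
`K_{n+1}` by deleting the path on the non-central vertices. -/
theorem stmt19 (n : ℕ) (hn : 4 ≤ n) :
    inS (starGraph n) (starA n) ∧
    ¬ HasSSP (starA n) ∧
    HasSSPwrt (Hgraph n) (starA n) :=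
  ⟨starA_inS n, starA_not_hasSSP hn, starA_hasSSPwrt_Hgraph n⟩
end
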